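/- arXiv:2108.13578 — 7 statements merged into one kernel-verified Lean document; each statement's English description precedes it below -/
import Mathlib

section
/- Let G = (V_L, V_R, E) be a bipartite t-left-regular (γ,μ)-unique expander with |V_L| = n, and suppose every vertex of V_R has degree at most s_max. Let B ∈ {0,1,−1}^{m×n} be any signed adjacency matrix of G. Let 0 < ε ≤ 1 and 1 ≤ p < 2 be such that ε² ≥ 9 μ s_max^{p−1}. Then B is (γn, ε)-ℓ_p-RIP with normalization t^{1/p}; that is, for every γn-sparse x ∈ ℝ^n, t^{1/p}(1−ε)‖x‖_p ≤ ‖Bx‖_p ≤ t^{1/p}(1+ε)‖x‖_p. -/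
open Finset

noncomputable def lpNorm {ι : Type*} [Fintype ι] (p : ℝ) (x : ι → ℝ) : ℝ :=
  (∑ i, |x i| ^ p) ^ (1 / p)

/-- `x` has at most `k` nonzero coordinates. -/
def Sparse {ι : Type*} (k : ℝ) (x : ι → ℝ) : Prop :=
  ((Function.support x).ncard : ℝ) ≤ k

/-- `x` is `(k, ε)`-`ℓ_p`-compressible. -/
def Compressible {ι : Type*} [Fintype ι] (p k ε : ℝ) (x : ι → ℝ) : Prop :=
  ∃ y : ι → ℝ, Sparse k y ∧ lpNorm p (x - y) ≤ ε * lpNorm p x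

/-- A subspace is `(k, ε)`-`ℓ_p`-spread if every nonzero vector in it is not
`(k, ε)`-`ℓ_p`-compressible. -/
def SpreadSubspace {ι : Type*} [Fintype ι] (p k ε : ℝ) (X : Submodule ℝ (ι → ℝ)) : Prop :=
  ∀ x ∈ X, x ≠ 0 → ¬ Compressible p k ε x

/-- The `(ℓ_q, ℓ_p)`-distortion of a vector. -/
noncomputable def distortion {ι : Type*} [Fintype ι] (q p : ℝ) (x : ι → ℝ) : ℝ :=
  (Fintype.card ι : ℝ) ^ (1 / q - 1 / p) * lpNorm p x / lpNorm q x

/-- The `(ℓ_q, ℓ_p)`-distortion of a subspace. -/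
noncomputable def distortionSub {ι : Type*} [Fintype ι] (q p : ℝ)
    (X : Submodule ℝ (ι → ℝ)) : ℝ :=
  sSup {d | ∃ x ∈ X, x ≠ 0 ∧ d = distortion q p x}

/-- A bipartite graph, presented as the neighbor sets of the left vertices,
is `t`-left-regular. -/
def LeftRegular {n m : ℕ} (N : Fin n → Finset (Fin m)) (t : ℕ) : Prop :=
  ∀ u, (N u).card = t

/-- The neighborhood `N(S)` of a set `S` of left vertices. -/
def nbrs {n m : ℕ} (N : Fin n → Finset (Fin m)) (S : Finset (Fin n)) : Finset (Fin m) :=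
  S.biUnion N

/-- The set `U(S)` of unique neighbors of a set `S` of left vertices. -/
def uniqueNbrs {n m : ℕ} (N : Fin n → Finset (Fin m)) (S : Finset (Fin n)) : Finset (Fin m) :=
  (nbrs N S).filter (fun r => (S.filter (fun v => r ∈ N v)).card = 1)

/-- The degree of a right vertex. -/
def rightDeg {n m : ℕ} (N : Fin n → Finset (Fin m)) (r : Fin m) : ℕ :=
  (Finset.univ.filter (fun u => r ∈ N u)).card

/-- `(γ, μ)`-vertex expansion. -/
def VertexExpander {n m : ℕ} (N : Fin n → Finset (Fin m)) (t : ℕ) (γ μ : ℝ) : Prop :=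
  ∀ S : Finset (Fin n), (S.card : ℝ) ≤ γ * n →
    (t : ℝ) * (1 - μ) * S.card ≤ ((nbrs N S).card : ℝ)

/-- `(γ, μ)`-unique expansion. -/
def UniqueExpander {n m : ℕ} (N : Fin n → Finset (Fin m)) (t : ℕ) (γ μ : ℝ) : Prop :=
  ∀ S : Finset (Fin n), (S.card : ℝ) ≤ γ * n →
    (t : ℝ) * (1 - μ) * S.card ≤ ((uniqueNbrs N S).card : ℝ)

/-- The bipartite graph `G_A` of a matrix, presented by neighbor sets of left vertices
(columns): the neighbors of `u ∈ V_L` are the rows `r` with `A r u ≠ 0`. -/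
noncomputable def matNbrs {m n : ℕ} (A : Matrix (Fin m) (Fin n) ℝ) : Fin n → Finset (Fin m) :=
  fun u => Finset.univ.filter (fun r => A r u ≠ 0)

/-- `A ∈ M_{m,n,s,t}`: entries in `{0, 1, -1}`, every row has exactly `s` nonzero entries,
and every column has exactly `t` nonzero entries. -/
def Biregular {m n : ℕ} (s t : ℕ) (A : Matrix (Fin m) (Fin n) ℝ) : Prop :=
  (∀ r u, A r u = 0 ∨ A r u = 1 ∨ A r u = -1) ∧
  (∀ r : Fin m, (Finset.univ.filter (fun u => A r u ≠ 0)).card = s) ∧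
  (∀ u : Fin n, (Finset.univ.filter (fun r => A r u ≠ 0)).card = t)

/-- The bipartite graph on `V_L ⊕ V_R` associated with left-neighbor data `N`. -/
def bipGraph {n m : ℕ} (N : Fin n → Finset (Fin m)) : SimpleGraph (Fin n ⊕ Fin m) where
  Adj x y :=
    match x, y with
    | Sum.inl u, Sum.inr r => r ∈ N u
    | Sum.inr r, Sum.inl u => r ∈ N u
    | _, _ => False
  symm := ⟨by rintro (u | r) (u' | r') h <;> first | exact h.elim | exact h⟩
  loopless := ⟨by rintro (u | r) h <;> exact h.elim⟩

/-- The ball of radius `ℓ` about `v` in a graph. -/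
def graphBall {V : Type*} (G : SimpleGraph V) (v : V) (ℓ : ℕ) : Set V :=
  {w | G.Reachable v w ∧ G.dist v w ≤ ℓ}

/-- The ball of radius `ℓ` about `v` contains no cycle. -/
def BallAcyclic {V : Type*} (G : SimpleGraph V) (v : V) (ℓ : ℕ) : Prop :=
  (SimpleGraph.induce (graphBall G v ℓ) G).IsAcyclic

/-- `𝒢_{m,n,s,t}`: the set of bipartite graphs on `V_L = Fin n`, `V_R = Fin m`
(presented by neighbor sets of left vertices) in which every left vertex has degree
exactly `t` and every right vertex has degree exactly `s`. -/
def GSet (m n s t : ℕ) : Finset (Fin n → Finset (Fin m)) :=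
  Finset.univ.filter (fun N => (∀ u, (N u).card = t) ∧ (∀ r, rightDeg N r = s))

/-- The edge set `F` is contained in the edge set of the graph given by `N`. -/
def edgesSubset {n m : ℕ} (F : Finset (Fin n × Fin m)) (N : Fin n → Finset (Fin m)) : Prop :=
  ∀ e ∈ F, e.2 ∈ N e.1

/-- The `ℓ₂ → ℓ₂` operator norm of a matrix. -/
noncomputable def l2OpNorm {m n : ℕ} (A : Matrix (Fin m) (Fin n) ℝ) : ℝ :=
  sSup {c | ∃ x : Fin n → ℝ, x ≠ 0 ∧ c = lpNorm 2 (A.mulVec x) / lpNorm 2 x}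

/-!
Order the support of `x` by `|x u|`, ties broken by index, and call an edge `(u, r)` colliding
when `r` has a neighbour of larger key in the support. Every row `r` has at most one
non-colliding neighbour `u`, so `|(Bx)_r|` is `|x_u|` up to the colliding terms of that row.
If `T` is an upper set of the support, every vertex of `N(T)` is reached from `T` by a
non-colliding edge, so unique expansion leaves at most `tμ|T|` colliding edges at `T`; as
`|x_u|^p` increases along the order, Abel summation gives `∑_u c(u) |x_u|^p ≤ tμ ‖x‖_p^p`,
where `c(u)` counts the colliding edges at `u`. Hence the non-colliding terms contribute
`t‖x‖_p^p` up to a factor `1 - μ`, the colliding ones at most `s_max^(p-1) tμ ‖x‖_p^p` by the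
power-mean inequality, and `(a + b)^p ≤ a^p / l + b^p / (1 - l)` (valid for `p ≤ 2`) with
`l = 2 / (2 + ε)` separates the two contributions in both directions.
-/

namespace Real

theorem add_rpow_le_inv_mul_add_inv_mul {p l a b : ℝ} (hp1 : 1 ≤ p) (hp2 : p ≤ 2)
    (hl0 : 0 < l) (hl1 : l < 1) (ha : 0 ≤ a) (hb : 0 ≤ b) :
    (a + b) ^ p ≤ l⁻¹ * a ^ p + (1 - l)⁻¹ * b ^ p := by
  have hl1' : 0 < 1 - l := by linarith
  have hconv := (convexOn_rpow hp1).2 (Set.mem_Ici.2 (div_nonneg ha hl0.le))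
    (Set.mem_Ici.2 (div_nonneg hb hl1'.le)) hl0.le hl1'.le (by ring)
  simp only [smul_eq_mul, mul_div_cancel₀ _ hl0.ne', mul_div_cancel₀ _ hl1'.ne',
    div_rpow ha hl0.le, div_rpow hb hl1'.le] at hconv
  have hweight : ∀ {c : ℝ}, 0 < c → c ≤ 1 → c * (c ^ p)⁻¹ ≤ c⁻¹ := fun {c} hc0 hc1 => by
    calc c * (c ^ p)⁻¹ = c ^ (1 - p) := by rw [rpow_sub hc0, rpow_one, div_eq_mul_inv]
      _ ≤ c ^ (-1 : ℝ) := rpow_le_rpow_of_exponent_ge hc0 hc1 (by linarith)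
      _ = c⁻¹ := rpow_neg_one c
  calc (a + b) ^ p ≤ l * (a ^ p / l ^ p) + (1 - l) * (b ^ p / (1 - l) ^ p) := hconv
    _ = l * (l ^ p)⁻¹ * a ^ p + (1 - l) * ((1 - l) ^ p)⁻¹ * b ^ p := by ring
    _ ≤ l⁻¹ * a ^ p + (1 - l)⁻¹ * b ^ p := by
      gcongr
      · exact hweight hl0 hl1.le
      · exact hweight hl1' (by linarith)

end Real

theorem Finset.sum_rpow_le_inv_mul_add_inv_mul {ι : Type*} (s : Finset ι) {p l : ℝ}
    (hp1 : 1 ≤ p) (hp2 : p ≤ 2) (hl0 : 0 < l) (hl1 : l < 1) {u v b : ι → ℝ}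
    (hu : ∀ i ∈ s, 0 ≤ u i) (hv : ∀ i ∈ s, 0 ≤ v i) (hb : ∀ i ∈ s, 0 ≤ b i)
    (huvb : ∀ i ∈ s, u i ≤ v i + b i) :
    ∑ i ∈ s, u i ^ p ≤ l⁻¹ * ∑ i ∈ s, v i ^ p + (1 - l)⁻¹ * ∑ i ∈ s, b i ^ p := by
  rw [mul_sum, mul_sum, ← sum_add_distrib]
  refine sum_le_sum fun i hi => ?_
  calc u i ^ p ≤ (v i + b i) ^ p := Real.rpow_le_rpow (hu i hi) (huvb i hi) (by linarith)
    _ ≤ _ := Real.add_rpow_le_inv_mul_add_inv_mul hp1 hp2 hl0 hl1 (hv i hi) (hb i hi)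

theorem sum_rpow_bounds_of_abs_sub_le {ι : Type*} [Fintype ι] {p ε δ M : ℝ} {y a b : ι → ℝ}
    (hp1 : 1 ≤ p) (hp2 : p ≤ 2) (hε0 : 0 < ε) (hε1 : ε ≤ 1) (hδ : 9 * δ ≤ ε ^ 2)
    (ha : ∀ i, 0 ≤ a i) (hb : ∀ i, 0 ≤ b i)
    (hy : ∀ i, |(|y i| - a i)| ≤ b i)
    (hAM : ∑ i, a i ^ p ≤ M) (hMA : (1 - δ) * M ≤ ∑ i, a i ^ p) (hC : ∑ i, b i ^ p ≤ δ * M) :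
    (1 - ε) ^ p * M ≤ ∑ i, |y i| ^ p ∧ ∑ i, |y i| ^ p ≤ (1 + ε) ^ p * M := by
  set l : ℝ := 2 / (2 + ε) with hl
  have hl0 : 0 < l := by positivity
  have hl1 : l < 1 := by rw [div_lt_one (by linarith)]; linarith
  have hl_inv : l⁻¹ = 1 + ε / 2 := by rw [hl, inv_div]; ring
  have hl_inv' : (1 - l)⁻¹ = (2 + ε) / ε := by
    rw [show 1 - l = ε / (2 + ε) by rw [hl]; field_simp; ring, inv_div]
  have hM : 0 ≤ M := (sum_nonneg fun i _ => Real.rpow_nonneg (ha i) p).trans hAM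
  have hcoll : (1 - l)⁻¹ * ∑ i, b i ^ p ≤ ε / 3 * M := by
    rw [hl_inv']
    calc (2 + ε) / ε * ∑ i, b i ^ p ≤ (2 + ε) / ε * (ε ^ 2 / 9 * M) := by
          gcongr; nlinarith
      _ = (2 + ε) * ε / 9 * M := by field_simp
      _ ≤ ε / 3 * M := mul_le_mul_of_nonneg_right (by nlinarith) hM
  have hupper := sum_rpow_le_inv_mul_add_inv_mul univ hp1 hp2 hl0 hl1
    (fun i _ => abs_nonneg (y i)) (fun i _ => ha i) (fun i _ => hb i)
    fun i _ => by linarith [(abs_sub_le_iff.1 (hy i)).1]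
  have hlower := sum_rpow_le_inv_mul_add_inv_mul univ hp1 hp2 hl0 hl1
    (fun i _ => ha i) (fun i _ => abs_nonneg (y i)) (fun i _ => hb i)
    fun i _ => by linarith [(abs_sub_le_iff.1 (hy i)).2]
  rw [hl_inv] at hupper hlower
  constructor
  · calc (1 - ε) ^ p * M ≤ (1 - ε) * M :=
          mul_le_mul_of_nonneg_right
            (Real.rpow_le_self_of_le_one (by linarith) (by linarith) hp1) hM
      _ ≤ ∑ i, |y i| ^ p := by nlinarith
  · calc ∑ i, |y i| ^ p ≤ (1 + ε) * M := by nlinarith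
      _ ≤ (1 + ε) ^ p * M :=
          mul_le_mul_of_nonneg_right (Real.self_le_rpow_of_one_le (by linarith) hp1) hM

theorem Real.rpow_mul_mul_rpow_one_div {p c t W : ℝ} (hp : p ≠ 0) (hc : 0 ≤ c) (ht : 0 ≤ t)
    (hW : 0 ≤ W) : (c ^ p * (t * W)) ^ (1 / p) = t ^ (1 / p) * c * W ^ (1 / p) := by
  rw [Real.mul_rpow (Real.rpow_nonneg hc p) (mul_nonneg ht hW), Real.mul_rpow ht hW,
    ← Real.rpow_mul hc, mul_one_div_cancel hp, Real.rpow_one]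
  ring

theorem Finset.sum_mul_le_mul_sum_of_upperClosed {ι κ : Type*} [DecidableEq ι] [LinearOrder κ]
    (key : ι → κ) (c w : ι → ℝ) (K : ℝ) (S : Finset ι) (hw : ∀ u ∈ S, 0 ≤ w u)
    (hmono : ∀ u ∈ S, ∀ v ∈ S, key u ≤ key v → w u ≤ w v)
    (hc : ∀ T ⊆ S, (∀ u ∈ T, ∀ v ∈ S, key u < key v → v ∈ T) → ∑ u ∈ T, c u ≤ K * #T) :
    ∑ u ∈ S, c u * w u ≤ K * ∑ u ∈ S, w u := by
  induction S using Finset.induction_on_min_value key generalizing w with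
  | empty => simp
  | insert a s has hmin ih =>
    have hs := ih (fun u => w u - w a)
      (fun u hu => sub_nonneg.2 (hmono a (mem_insert_self a s) u (mem_insert_of_mem hu)
        (hmin u hu)))
      (fun u hu v hv huv => sub_le_sub_right (hmono u (mem_insert_of_mem hu) v
        (mem_insert_of_mem hv) huv) _)
      (fun T hTs hT => hc T (hTs.trans (subset_insert a s)) fun u hu v hv huv => by
        rcases mem_insert.1 hv with rfl | hv
        · exact absurd (hmin u (hTs hu)) (not_le.2 huv)
        · exact hT u hu v hv huv)
    have hall := mul_le_mul_of_nonneg_left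
      (hc (insert a s) Subset.rfl fun u hu v hv _ => hv) (hw a (mem_insert_self a s))
    simp only [mul_sub, sum_sub_distrib, sum_const, nsmul_eq_mul, ← sum_mul] at hs
    rw [sum_insert has, card_insert_of_notMem has] at hall
    rw [sum_insert has, sum_insert has]
    push_cast at hall
    nlinarith

theorem Finset.apply_sum_of_card_le_one {ι : Type*} {s : Finset ι} (hs : #s ≤ 1) {g : ℝ → ℝ}
    (hg : g 0 = 0) (f : ι → ℝ) : g (∑ i ∈ s, f i) = ∑ i ∈ s, g (f i) := by
  rcases s.eq_empty_or_nonempty with rfl | hne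
  · simp [hg]
  · obtain ⟨a, rfl⟩ := card_eq_one.1 (le_antisymm hs hne.card_pos)
    simp

theorem Finset.sum_sum_filter_mem_and {ι κ : Type*} [Fintype κ] [DecidableEq κ]
    (N : ι → Finset κ) (s : Finset ι) (P : ι → κ → Prop) [∀ u r, Decidable (P u r)] (f : ι → ℝ) :
    ∑ r, ∑ u ∈ s.filter (fun u => r ∈ N u ∧ P u r), f u
      = ∑ u ∈ s, (#((N u).filter (P u)) : ℝ) * f u := by
  rw [sum_comm' (t' := s) (s' := fun u => (N u).filter (P u)) (by intro r u; simp; tauto)]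
  simp only [sum_const, nsmul_eq_mul]

noncomputable section Collisions

variable {n m : ℕ} (N : Fin n → Finset (Fin m)) (x : Fin n → ℝ)

def suppFinset : Finset (Fin n) := univ.filter fun u => x u ≠ 0

def absKey (u : Fin n) : ℝ ×ₗ Fin n := toLex (|x u|, u)

def Collides (u : Fin n) (r : Fin m) : Prop :=
  ∃ v ∈ suppFinset x, r ∈ N v ∧ absKey x u < absKey x v

instance (u : Fin n) (r : Fin m) : Decidable (Collides N x u r) := by
  unfold Collides; infer_instance

def collisionEdges (u : Fin n) : Finset (Fin m) := (N u).filter (Collides N x u)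

def topNbrs (r : Fin m) : Finset (Fin n) :=
  (suppFinset x).filter fun u => r ∈ N u ∧ ¬ Collides N x u r

def collidingNbrs (r : Fin m) : Finset (Fin n) :=
  (suppFinset x).filter fun u => r ∈ N u ∧ Collides N x u r

variable {N x}

theorem mem_suppFinset {u : Fin n} : u ∈ suppFinset x ↔ x u ≠ 0 := by simp [suppFinset]

theorem absKey_injective : Function.Injective (absKey x) := fun u v h => by
  simpa [absKey] using congrArg (fun k => (ofLex k).2) h

theorem abs_le_abs_of_absKey_le {u v : Fin n} (h : absKey x u ≤ absKey x v) : |x u| ≤ |x v| :=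
  Prod.Lex.monotone_fst _ _ h

theorem card_suppFinset_le {k : ℝ} (hx : Sparse k x) : (#(suppFinset x) : ℝ) ≤ k := by
  rwa [Sparse, show Function.support x = ↑(suppFinset x) by ext; simp [mem_suppFinset],
    Set.ncard_coe_finset] at hx

theorem sum_suppFinset_abs_rpow {p : ℝ} (hp : p ≠ 0) :
    ∑ u ∈ suppFinset x, |x u| ^ p = ∑ u, |x u| ^ p :=
  sum_filter_of_ne fun u _ h hxu => h (by simp [hxu, Real.zero_rpow hp])

theorem card_topNbrs_le_one (r : Fin m) : #(topNbrs N x r) ≤ 1 := by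
  refine card_le_one.2 fun u hu v hv => absKey_injective (x := x) (le_antisymm ?_ ?_)
  all_goals
    simp only [topNbrs, mem_filter, Collides, not_exists, not_and, not_lt] at hu hv
  · exact hv.2.2 u hu.1 hu.2.1
  · exact hu.2.2 v hv.1 hv.2.1

theorem sum_topNbrs_eq {t : ℕ} (hreg : LeftRegular N t) (f : Fin n → ℝ) :
    ∑ r, ∑ u ∈ topNbrs N x r, f u
      = ∑ u ∈ suppFinset x, ((t : ℝ) - #(collisionEdges N x u)) * f u := by
  simp only [topNbrs]
  rw [sum_sum_filter_mem_and]
  refine sum_congr rfl fun u _ => ?_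
  have hsplit : (#(collisionEdges N x u) : ℝ) + #((N u).filter (¬ Collides N x u ·)) = t := by
    exact_mod_cast (card_filter_add_card_filter_not _).trans (hreg u)
  rw [← hsplit]
  ring

theorem sum_collidingNbrs_eq (f : Fin n → ℝ) :
    ∑ r, ∑ u ∈ collidingNbrs N x r, f u
      = ∑ u ∈ suppFinset x, (#(collisionEdges N x u) : ℝ) * f u :=
  sum_sum_filter_mem_and N _ _ f

theorem mulVec_eq_sum_topNbrs_add_sum_collidingNbrs {B : Matrix (Fin m) (Fin n) ℝ}
    (hadj : ∀ r u, B r u ≠ 0 ↔ r ∈ N u) (r : Fin m) :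
    B.mulVec x r = ∑ u ∈ topNbrs N x r, B r u * x u + ∑ u ∈ collidingNbrs N x r, B r u * x u := by
  have hsplit := sum_filter_not_add_sum_filter ((suppFinset x).filter (r ∈ N ·))
    (Collides N x · r) (fun u => B r u * x u)
  simp only [filter_filter] at hsplit
  rw [topNbrs, collidingNbrs, hsplit, suppFinset, filter_filter, Matrix.mulVec, dotProduct]
  exact (sum_filter_of_ne fun u _ h =>
    ⟨right_ne_zero_of_mul h, (hadj r u).1 (left_ne_zero_of_mul h)⟩).symm

end Collisions

section Expansion

variable {n m : ℕ} {N : Fin n → Finset (Fin m)} {x : Fin n → ℝ} {t : ℕ} {γ μ : ℝ}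

theorem abs_abs_mulVec_sub_sum_topNbrs_le {B : Matrix (Fin m) (Fin n) ℝ}
    (hsign : ∀ r u, B r u = 0 ∨ B r u = 1 ∨ B r u = -1) (hadj : ∀ r u, B r u ≠ 0 ↔ r ∈ N u)
    (r : Fin m) :
    |(|B.mulVec x r| - ∑ u ∈ topNbrs N x r, |x u|)| ≤ ∑ u ∈ collidingNbrs N x r, |x u| := by
  have habs : ∀ u, r ∈ N u → |B r u * x u| = |x u| := fun u hu => by
    rcases hsign r u with h | h | h
    · exact absurd h ((hadj r u).2 hu)
    all_goals simp [h]
  have htop : |∑ u ∈ topNbrs N x r, B r u * x u| = ∑ u ∈ topNbrs N x r, |x u| := by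
    rw [apply_sum_of_card_le_one (card_topNbrs_le_one r) abs_zero]
    exact sum_congr rfl fun u hu => habs u (mem_filter.1 hu).2.1
  have hcoll : |∑ u ∈ collidingNbrs N x r, B r u * x u| ≤ ∑ u ∈ collidingNbrs N x r, |x u| :=
    (abs_sum_le_sum_abs _ _).trans_eq (sum_congr rfl fun u hu => habs u (mem_filter.1 hu).2.1)
  rw [mulVec_eq_sum_topNbrs_add_sum_collidingNbrs hadj, ← htop]
  exact (abs_abs_sub_abs_le_abs_sub _ _).trans (by rwa [add_sub_cancel_left])

theorem UniqueExpander.sum_card_filter_le (hreg : LeftRegular N t)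
    (hexp : UniqueExpander N t γ μ) {T : Finset (Fin n)} (hT : (#T : ℝ) ≤ γ * n)
    (P : Fin n → Fin m → Prop) [∀ u r, Decidable (P u r)]
    (hcover : nbrs N T ⊆ T.biUnion fun u => (N u).filter (¬ P u ·)) :
    ∑ u ∈ T, (#((N u).filter (P u)) : ℝ) ≤ t * μ * #T := by
  have hnbrs : (#(nbrs N T) : ℝ) ≤ ∑ u ∈ T, (#((N u).filter (¬ P u ·)) : ℝ) := by
    exact_mod_cast (card_le_card hcover).trans card_biUnion_le
  have hunique : (#(uniqueNbrs N T) : ℝ) ≤ #(nbrs N T) := by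
    exact_mod_cast card_le_card (filter_subset _ _)
  have hsplit : ∀ u, (#((N u).filter (P u)) : ℝ) + #((N u).filter (¬ P u ·)) = t := fun u => by
    exact_mod_cast (card_filter_add_card_filter_not _).trans (hreg u)
  have hsum := sum_congr rfl fun u (_ : u ∈ T) => eq_sub_of_add_eq (hsplit u)
  rw [sum_sub_distrib, sum_const, nsmul_eq_mul] at hsum
  linarith [hexp T hT]

theorem nbrs_subset_biUnion_not_collides {T : Finset (Fin n)}
    (hup : ∀ u ∈ T, ∀ v ∈ suppFinset x, absKey x u < absKey x v → v ∈ T) :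
    nbrs N T ⊆ T.biUnion fun u => (N u).filter (¬ Collides N x u ·) := by
  intro r hr
  obtain ⟨v, hvT, hrv⟩ := mem_biUnion.1 hr
  obtain ⟨u, hu, humax⟩ := (T.filter (r ∈ N ·)).exists_max_image (absKey x)
    ⟨v, mem_filter.2 ⟨hvT, hrv⟩⟩
  rw [mem_filter] at hu
  refine mem_biUnion.2 ⟨u, hu.1, mem_filter.2 ⟨hu.2, ?_⟩⟩
  rintro ⟨w, hw, hrw, hlt⟩
  exact (humax w (mem_filter.2 ⟨hup u hu.1 w hw hlt, hrw⟩)).not_gt hlt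

theorem sum_card_collisionEdges_mul_le (hreg : LeftRegular N t) (hexp : UniqueExpander N t γ μ)
    (hx : Sparse (γ * n) x) {p : ℝ} (hp : 0 ≤ p) :
    ∑ u ∈ suppFinset x, (#(collisionEdges N x u) : ℝ) * |x u| ^ p
      ≤ t * μ * ∑ u ∈ suppFinset x, |x u| ^ p :=
  sum_mul_le_mul_sum_of_upperClosed (absKey x) _ _ _ _
    (fun u _ => Real.rpow_nonneg (abs_nonneg _) p)
    (fun u _ v _ h => Real.rpow_le_rpow (abs_nonneg _) (abs_le_abs_of_absKey_le h) hp)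
    fun T hT hup => hexp.sum_card_filter_le hreg
      (le_trans (by exact_mod_cast card_le_card hT) (card_suppFinset_le hx)) _
      (nbrs_subset_biUnion_not_collides hup)

theorem sum_collidingNbrs_rpow_le {smax : ℕ} (hsmax : ∀ r, rightDeg N r ≤ smax) {p : ℝ}
    (hp : 1 ≤ p) :
    ∑ r, (∑ u ∈ collidingNbrs N x r, |x u|) ^ p
      ≤ (smax : ℝ) ^ (p - 1) * ∑ u ∈ suppFinset x, (#(collisionEdges N x u) : ℝ) * |x u| ^ p := by
  rw [← sum_collidingNbrs_eq, mul_sum]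
  refine sum_le_sum fun r _ => (Real.rpow_sum_le_const_mul_sum_rpow _ _ hp).trans ?_
  have hcard : #(collidingNbrs N x r) ≤ smax :=
    (card_le_card fun u hu => by simpa using (mem_filter.1 hu).2.1).trans (hsmax r)
  gcongr

theorem UniqueExpander.nonneg (hreg : LeftRegular N t) (hexp : UniqueExpander N t γ μ)
    (ht : 0 < t) (u : Fin n) (hγ : 1 ≤ γ * n) : 0 ≤ μ := by
  have hu := hexp {u} (by simpa using hγ)
  have hcard : #(uniqueNbrs N {u}) ≤ t :=
    (card_le_card (filter_subset _ _)).trans (by simp [nbrs, hreg u])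
  have htR : (0 : ℝ) < t := by exact_mod_cast ht
  have : (t : ℝ) * (1 - μ) ≤ t := by simpa using hu.trans (by exact_mod_cast hcard)
  nlinarith

theorem one_le_of_rightDeg_le (hreg : LeftRegular N t) (ht : 0 < t) (u : Fin n) {smax : ℕ}
    (hsmax : ∀ r, rightDeg N r ≤ smax) : 1 ≤ smax := by
  obtain ⟨r, hr⟩ := card_pos.1 ((hreg u).symm ▸ ht)
  have hdeg : 0 < rightDeg N r := card_pos.2 ⟨u, by simp [hr]⟩
  exact hdeg.trans_le (hsmax r)

theorem UniqueExpander.mul_le_mul_rpow_mul_sum (hreg : LeftRegular N t)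
    (hexp : UniqueExpander N t γ μ) (hx : Sparse (γ * n) x) {smax : ℕ}
    (hsmax : ∀ r, rightDeg N r ≤ smax) {p : ℝ} (hp : 1 ≤ p) :
    t * μ * ∑ u ∈ suppFinset x, |x u| ^ p
      ≤ t * (μ * smax ^ (p - 1)) * ∑ u ∈ suppFinset x, |x u| ^ p := by
  rcases (suppFinset x).eq_empty_or_nonempty with hS | ⟨u, hu⟩
  · simp [hS]
  rcases Nat.eq_zero_or_pos t with rfl | ht
  · simp
  have hγ : (1 : ℝ) ≤ γ * n :=
    le_trans (by exact_mod_cast card_pos.2 ⟨u, hu⟩) (card_suppFinset_le hx)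
  have hs : (1 : ℝ) ≤ smax := by exact_mod_cast one_le_of_rightDeg_le hreg ht u hsmax
  gcongr
  exact le_mul_of_one_le_right (hexp.nonneg hreg ht u hγ) (Real.one_le_rpow hs (by linarith))

end Expansion

/-- **ℓ_p-RIP of expander graphs.** If `G` is a bipartite `t`-left-regular `(γ, μ)`-unique
expander with max right degree `s_max`, `B` is a signed adjacency matrix of `G`,
`0 < ε ≤ 1`, `1 ≤ p < 2` and `ε² ≥ 9 μ s_max^(p-1)`, then `B` is `(γn, ε)`-`ℓ_p`-RIP with
normalization `t^(1/p)`. -/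
theorem expansion_to_RIP {n m : ℕ} (t smax : ℕ) (γ μ : ℝ)
    (N : Fin n → Finset (Fin m))
    (hreg : LeftRegular N t) (hexp : UniqueExpander N t γ μ)
    (hsmax : ∀ r : Fin m, rightDeg N r ≤ smax)
    (B : Matrix (Fin m) (Fin n) ℝ)
    (hsign : ∀ r u, B r u = 0 ∨ B r u = 1 ∨ B r u = -1)
    (hadj : ∀ r u, B r u ≠ 0 ↔ r ∈ N u)
    (ε p : ℝ) (hε0 : 0 < ε) (hε1 : ε ≤ 1) (hp1 : 1 ≤ p) (hp2 : p < 2)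
    (hcond : ε ^ 2 ≥ 9 * μ * (smax : ℝ) ^ (p - 1)) :
    ∀ x : Fin n → ℝ, Sparse (γ * n) x →
      (t : ℝ) ^ (1 / p) * (1 - ε) * lpNorm p x ≤ lpNorm p (B.mulVec x) ∧
      lpNorm p (B.mulVec x) ≤ (t : ℝ) ^ (1 / p) * (1 + ε) * lpNorm p x := by
  intro x hx
  have hp0 : p ≠ 0 := by positivity
  have hE := sum_card_collisionEdges_mul_le hreg hexp hx (p := p) (by positivity)
  have hδ := hexp.mul_le_mul_rpow_mul_sum hreg hx hsmax hp1
  have hC := (sum_collidingNbrs_rpow_le hsmax hp1 (x := x)).trans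
    (mul_le_mul_of_nonneg_left hE (by positivity))
  set W := ∑ u ∈ suppFinset x, |x u| ^ p
  set E := ∑ u ∈ suppFinset x, (#(collisionEdges N x u) : ℝ) * |x u| ^ p
  have hW : 0 ≤ W := sum_nonneg fun u _ => by positivity
  have hE0 : 0 ≤ E := sum_nonneg fun u _ => by positivity
  have hA : ∑ r, (∑ u ∈ topNbrs N x r, |x u|) ^ p = t * W - E := by
    simp_rw [apply_sum_of_card_le_one (card_topNbrs_le_one _) (g := (· ^ p))
      (Real.zero_rpow hp0)]
    rw [sum_topNbrs_eq hreg, mul_sum, ← sum_sub_distrib]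
    exact sum_congr rfl fun u _ => by ring
  obtain ⟨hlower, hupper⟩ := sum_rpow_bounds_of_abs_sub_le (M := t * W)
    (δ := μ * smax ^ (p - 1)) hp1 hp2.le hε0 hε1 (by linarith)
    (fun r => sum_nonneg fun u _ => abs_nonneg (x u))
    (fun r => sum_nonneg fun u _ => abs_nonneg (x u))
    (abs_abs_mulVec_sub_sum_topNbrs_le hsign hadj)
    (by linarith) (by linarith) (by linarith)
  rw [lpNorm, lpNorm, ← sum_suppFinset_abs_rpow hp0,
    ← Real.rpow_mul_mul_rpow_one_div hp0 (by linarith) (by positivity) hW,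
    ← Real.rpow_mul_mul_rpow_one_div hp0 (by linarith) (by positivity) hW]
  exact ⟨Real.rpow_le_rpow (by positivity) hlower (by positivity),
    Real.rpow_le_rpow (sum_nonneg fun r _ => by positivity) hupper (by positivity)⟩
end

section
/- Let 1 ≤ p, let k ≤ n be positive integers, let ε ∈ [0,1], and suppose the subspace X ⊆ ℝ^n is (2k, ε)-ℓ_p-spread. Then for every 1 ≤ q < p, X is (k, ε_q)-ℓ_q-spread, where ε_q = ε² (k/n)^{1/q}. -/
open Finset

/-!
Let `y` be a `k`-sparse vector. Among the coordinates off `supp y`, keep the `k` largest ones of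
`x` together with `supp y`; this gives a `2k`-sparse `z`. Every coordinate of `x - z` is bounded by
the smallest kept magnitude `δ` and by the corresponding coordinate of `x - y`, while the `k` kept
coordinates force `k δ^q ≤ ‖x - y‖_q^q`. Interpolating gives `k^(1/q - 1/p) ‖x - z‖_p ≤ ‖x - y‖_q`,
and the power-mean inequality `‖x‖_q ≤ n^(1/q - 1/p) ‖x‖_p` turns `ℓ_p`-spreadness into
`ℓ_q`-spreadness.
-/

lemma Finset.exists_subset_card_eq_forall_le {α β : Type*} [DecidableEq α] [LinearOrder β]
    (f : α → β) (U : Finset α) {k : ℕ} (hk : k ≤ #U) :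
    ∃ T ⊆ U, #T = k ∧ ∀ i ∈ U \ T, ∀ j ∈ T, f i ≤ f j := by
  induction k with
  | zero => exact ⟨∅, empty_subset _, rfl, by simp⟩
  | succ k ih =>
    obtain ⟨T, hTU, hTcard, hT⟩ := ih (Nat.le_of_succ_le hk)
    have hne : (U \ T).Nonempty := by
      rw [← card_pos, card_sdiff_of_subset hTU]
      omega
    obtain ⟨j₀, hj₀, hj₀max⟩ := exists_max_image (U \ T) f hne
    obtain ⟨hj₀U, hj₀T⟩ := mem_sdiff.mp hj₀
    refine ⟨insert j₀ T, insert_subset hj₀U hTU, by rw [card_insert_of_notMem hj₀T, hTcard], ?_⟩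
    intro i hi j hj
    obtain ⟨hiU, hij₀T⟩ := mem_sdiff.mp hi
    have hi' : i ∈ U \ T := mem_sdiff.mpr ⟨hiU, fun h => hij₀T (mem_insert_of_mem h)⟩
    rcases mem_insert.mp hj with rfl | hjT
    · exact hj₀max i hi'
    · exact hT i hi' j hjT

lemma Real.rpow_le_rpow_sub_mul_rpow {a δ p q : ℝ} (ha : 0 ≤ a) (haδ : a ≤ δ) (hq : 0 ≤ q)
    (hqp : q ≤ p) : a ^ p ≤ δ ^ (p - q) * a ^ q := by
  calc a ^ p = a ^ (p - q) * a ^ q := by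
        rw [← Real.rpow_add_of_nonneg ha (sub_nonneg.mpr hqp) hq, sub_add_cancel]
    _ ≤ δ ^ (p - q) * a ^ q := by gcongr

lemma Real.rpow_one_div_sub_mul_le {c δ r N p q : ℝ} (hc : 0 ≤ c) (hδ : 0 ≤ δ) (hr : 0 ≤ r)
    (hN : 0 ≤ N) (hq : 0 < q) (hqp : q ≤ p) (hcδ : c * δ ^ q ≤ r ^ q)
    (hNδ : N ^ p ≤ δ ^ (p - q) * r ^ q) : c ^ (1 / q - 1 / p) * N ≤ r := by
  have hp : 0 < p := hq.trans_le hqp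
  have he : 0 ≤ (p - q) / q := div_nonneg (sub_nonneg.mpr hqp) hq.le
  rw [← Real.rpow_le_rpow_iff (by positivity) hr hp]
  calc (c ^ (1 / q - 1 / p) * N) ^ p = c ^ ((p - q) / q) * N ^ p := by
        rw [Real.mul_rpow (by positivity) hN, ← Real.rpow_mul hc]
        congr 2
        field_simp
    _ ≤ c ^ ((p - q) / q) * (δ ^ (p - q) * r ^ q) := by gcongr
    _ = (c * δ ^ q) ^ ((p - q) / q) * r ^ q := by
        rw [Real.mul_rpow hc (by positivity), ← Real.rpow_mul hδ, mul_div_cancel₀ _ hq.ne']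
        ring
    _ ≤ (r ^ q) ^ ((p - q) / q) * r ^ q := by gcongr
    _ = r ^ p := by
        rw [← Real.rpow_mul hr, mul_div_cancel₀ _ hq.ne',
          ← Real.rpow_add_of_nonneg hr (sub_nonneg.mpr hqp) hq.le, sub_add_cancel]

lemma sparse_of_support_subset {ι : Type*} {k : ℝ} {x : ι → ℝ} {s : Finset ι}
    (hs : Function.support x ⊆ s) (hsk : (#s : ℝ) ≤ k) : Sparse k x :=
  le_trans (by exact_mod_cast (Set.ncard_coe_finset s) ▸ Set.ncard_le_ncard hs (s.finite_toSet))
    hsk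

section lpNorm

variable {ι : Type*} [Fintype ι]

lemma lpNorm_nonneg (p : ℝ) (x : ι → ℝ) : 0 ≤ lpNorm p x :=
  Real.rpow_nonneg (sum_nonneg fun _ _ => Real.rpow_nonneg (abs_nonneg _) p) _

lemma lpNorm_rpow {p : ℝ} (hp : p ≠ 0) (x : ι → ℝ) : lpNorm p x ^ p = ∑ i, |x i| ^ p := by
  rw [lpNorm, ← Real.rpow_mul (sum_nonneg fun _ _ => Real.rpow_nonneg (abs_nonneg _) p),
    one_div_mul_cancel hp, Real.rpow_one]

lemma lpNorm_zero {p : ℝ} (hp : p ≠ 0) : lpNorm p (0 : ι → ℝ) = 0 := by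
  simp [lpNorm, Real.zero_rpow hp, Real.zero_rpow (inv_ne_zero hp)]

lemma lpNorm_le_card_rpow_mul_lpNorm {p q : ℝ} (hq : 0 < q) (hqp : q ≤ p) (x : ι → ℝ) :
    lpNorm q x ≤ (Fintype.card ι : ℝ) ^ (1 / q - 1 / p) * lpNorm p x := by
  have hp : 0 < p := hq.trans_le hqp
  rw [← Real.rpow_le_rpow_iff (lpNorm_nonneg q x)
    (mul_nonneg (by positivity) (lpNorm_nonneg p x)) hp]
  have hpow : ∀ i, (|x i| ^ q) ^ (p / q) = |x i| ^ p := fun i => by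
    rw [← Real.rpow_mul (abs_nonneg _), mul_div_cancel₀ _ hq.ne']
  calc lpNorm q x ^ p = (∑ i, |x i| ^ q) ^ (p / q) := by
        rw [← lpNorm_rpow hq.ne', ← Real.rpow_mul (lpNorm_nonneg q x), mul_div_cancel₀ _ hq.ne']
    _ ≤ (Fintype.card ι : ℝ) ^ (p / q - 1) * ∑ i, |x i| ^ p := by
        simpa only [hpow, card_univ] using Real.rpow_sum_le_const_mul_sum_rpow_of_nonneg univ
          ((one_le_div hq).mpr hqp) fun i _ => Real.rpow_nonneg (abs_nonneg (x i)) q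
    _ = ((Fintype.card ι : ℝ) ^ (1 / q - 1 / p) * lpNorm p x) ^ p := by
        rw [Real.mul_rpow (by positivity) (lpNorm_nonneg p x), lpNorm_rpow hp.ne',
          ← Real.rpow_mul (Nat.cast_nonneg _)]
        congr 2
        field_simp

lemma sum_abs_rpow_le_of_abs_le {w v : ι → ℝ} {δ p q : ℝ} (hwδ : ∀ i, |w i| ≤ δ)
    (hwv : ∀ i, |w i| ≤ |v i|) (hq : 0 ≤ q) (hqp : q ≤ p) :
    ∑ i, |w i| ^ p ≤ δ ^ (p - q) * ∑ i, |v i| ^ q := by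
  rw [mul_sum]
  refine sum_le_sum fun i _ => ?_
  calc |w i| ^ p ≤ δ ^ (p - q) * |w i| ^ q :=
        Real.rpow_le_rpow_sub_mul_rpow (abs_nonneg _) (hwδ i) hq hqp
    _ ≤ δ ^ (p - q) * |v i| ^ q :=
        mul_le_mul_of_nonneg_left (Real.rpow_le_rpow (abs_nonneg _) (hwv i) hq)
          (Real.rpow_nonneg ((abs_nonneg _).trans (hwδ i)) _)

lemma card_rpow_mul_lpNorm_indicator_compl_le {p q : ℝ} (hq : 0 < q) (hqp : q ≤ p)
    [DecidableEq ι] {x y : ι → ℝ} {T T' : Finset ι} (hy : ∀ i ∉ T, y i = 0) (hT'T : T' ⊆ Tᶜ)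
    (hT' : T'.Nonempty) (hT'max : ∀ i ∈ Tᶜ \ T', ∀ j ∈ T', |x i| ≤ |x j|) :
    (#T' : ℝ) ^ (1 / q - 1 / p) * lpNorm p ((↑(T ∪ T') : Set ι)ᶜ.indicator x) ≤
      lpNorm q (x - y) := by
  have hp : 0 < p := hq.trans_le hqp
  set δ := T'.inf' hT' (|x ·|)
  have hδ : 0 ≤ δ := (le_inf'_iff _ _).mpr fun _ _ => abs_nonneg _
  have hxy : ∀ i ∉ T, (x - y) i = x i := fun i hi => by simp [hy i hi]
  have htail : ∀ i, |(↑(T ∪ T') : Set ι)ᶜ.indicator x i| ≤ δ ∧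
      |(↑(T ∪ T') : Set ι)ᶜ.indicator x i| ≤ |(x - y) i| := by
    intro i
    by_cases hi : i ∈ T ∪ T'
    · rw [Set.indicator_of_notMem (Set.notMem_compl_iff.mpr (mem_coe.mpr hi)), abs_zero]
      exact ⟨hδ, abs_nonneg _⟩
    obtain ⟨hiT, hiT'⟩ : i ∉ T ∧ i ∉ T' := by simpa using hi
    rw [Set.indicator_of_mem (by simpa using hi), hxy i hiT]
    exact ⟨le_inf' _ _ fun j hj => hT'max i (mem_sdiff.mpr ⟨mem_compl.mpr hiT, hiT'⟩) j hj,
      le_rfl⟩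
  refine Real.rpow_one_div_sub_mul_le (Nat.cast_nonneg _) hδ (lpNorm_nonneg _ _)
    (lpNorm_nonneg _ _) hq hqp ?_ ?_
  · rw [lpNorm_rpow hq.ne']
    calc (#T' : ℝ) * δ ^ q = ∑ _i ∈ T', δ ^ q := by rw [sum_const, nsmul_eq_mul]
      _ ≤ ∑ i ∈ T', |(x - y) i| ^ q := sum_le_sum fun i hi => by
          rw [hxy i (mem_compl.mp (hT'T hi))]
          exact Real.rpow_le_rpow hδ (inf'_le _ hi) hq.le
      _ ≤ ∑ i, |(x - y) i| ^ q := sum_le_sum_of_subset_of_nonneg (subset_univ _)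
          fun _ _ _ => Real.rpow_nonneg (abs_nonneg _) q
  · rw [lpNorm_rpow hp.ne', lpNorm_rpow hq.ne']
    exact sum_abs_rpow_le_of_abs_le (fun i => (htail i).1) (fun i => (htail i).2) hq.le hqp

theorem exists_sparse_lpNorm_sub_le {p q : ℝ} (hq : 0 < q) (hqp : q ≤ p) {k : ℕ} (hk : 0 < k)
    (x y : ι → ℝ) (hy : Sparse k y) :
    ∃ z, Sparse (2 * k) z ∧ (k : ℝ) ^ (1 / q - 1 / p) * lpNorm p (x - z) ≤ lpNorm q (x - y) := by
  classical
  set T := univ.filter (y · ≠ 0)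
  have hT : #T ≤ k := by
    have hyT : Function.support y = T := by ext; simp [T]
    have := hy
    rwa [Sparse, hyT, Set.ncard_coe_finset, Nat.cast_le] at this
  by_cases hTc : #Tᶜ < k
  · refine ⟨x, sparse_of_support_subset (s := univ) (by simp) ?_, ?_⟩
    · rw [card_univ, ← card_add_card_compl T]
      exact_mod_cast (by omega : #T + #Tᶜ ≤ 2 * k)
    · rw [sub_self, lpNorm_zero (hq.trans_le hqp).ne', mul_zero]
      exact lpNorm_nonneg q _
  obtain ⟨T', hT'T, hT'k, hT'max⟩ :=
    exists_subset_card_eq_forall_le (|x ·|) Tᶜ (not_lt.mp hTc)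
  refine ⟨(↑(T ∪ T') : Set ι).indicator x, sparse_of_support_subset (s := T ∪ T')
    Set.support_indicator_subset (by exact_mod_cast (card_union_le T T').trans (by omega)), ?_⟩
  rw [← Set.indicator_compl, ← hT'k]
  exact card_rpow_mul_lpNorm_indicator_compl_le hq hqp (fun i hi => by simpa [T] using hi) hT'T
    (card_pos.mp (hT'k ▸ hk)) hT'max

end lpNorm

theorem spread_p_to_q_general {n : ℕ} (p : ℝ) (k : ℕ) (hk : 0 < k) (hkn : k ≤ n)
    (ε : ℝ) (hε : ε ∈ Set.Icc (0 : ℝ) 1) (X : Submodule ℝ (Fin n → ℝ))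
    (hX : SpreadSubspace p (2 * (k : ℝ)) ε X)
    (q : ℝ) (hq : 1 ≤ q) (hqp : q < p) :
    SpreadSubspace q k (ε ^ 2 * ((k : ℝ) / n) ^ (1 / q)) X := by
  rintro x hxX hx0 ⟨y, hy, hxy⟩
  have hq0 : 0 < q := by linarith
  have hkR : (0 : ℝ) < k := by exact_mod_cast hk
  have hnR : (0 : ℝ) < n := by exact_mod_cast hk.trans_le hkn
  obtain ⟨z, hz, hxz⟩ := exists_sparse_lpNorm_sub_le hq0 hqp.le hk x y hy
  have hspread : ε * lpNorm p x < lpNorm p (x - z) :=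
    not_le.mp fun h => hX x hxX hx0 ⟨z, hz, h⟩
  have hpower : lpNorm q x ≤ (n : ℝ) ^ (1 / q - 1 / p) * lpNorm p x := by
    simpa using lpNorm_le_card_rpow_mul_lpNorm hq0 hqp.le x
  have hconst : ε ^ 2 * ((k : ℝ) / n) ^ (1 / q) ≤ ε * ((k : ℝ) / n) ^ (1 / q - 1 / p) := by
    have hkn1 : (k : ℝ) / n ≤ 1 := (div_le_one hnR).mpr (by exact_mod_cast hkn)
    have hp0 : 0 < 1 / p := one_div_pos.mpr (hq0.trans hqp)
    refine mul_le_mul (by nlinarith [hε.1, hε.2]) ?_ (by positivity) hε.1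
    exact Real.rpow_le_rpow_of_exponent_ge (by positivity) hkn1 (by linarith)
  refine lt_irrefl ((k : ℝ) ^ (1 / q - 1 / p) * (ε * lpNorm p x)) ?_
  calc (k : ℝ) ^ (1 / q - 1 / p) * (ε * lpNorm p x)
      < (k : ℝ) ^ (1 / q - 1 / p) * lpNorm p (x - z) := by gcongr
    _ ≤ lpNorm q (x - y) := hxz
    _ ≤ ε ^ 2 * ((k : ℝ) / n) ^ (1 / q) * lpNorm q x := hxy
    _ ≤ ε * ((k : ℝ) / n) ^ (1 / q - 1 / p) * ((n : ℝ) ^ (1 / q - 1 / p) * lpNorm p x) :=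
        mul_le_mul hconst hpower (lpNorm_nonneg q x) (mul_nonneg hε.1 (by positivity))
    _ = (k : ℝ) ^ (1 / q - 1 / p) * (ε * lpNorm p x) := by
        have : (0 : ℝ) < (n : ℝ) ^ (1 / q - 1 / p) := by positivity
        rw [Real.div_rpow hkR.le hnR.le]
        field_simp

/-- **ℓ_p-spread implies ℓ_q-spread.** If `X ⊆ ℝ^n` is `(2k, ε)`-`ℓ_p`-spread with
`1 ≤ q < p`, then `X` is `(k, ε² (k/n)^(1/q))`-`ℓ_q`-spread. -/
theorem spread_p_to_q {n : ℕ} (p : ℝ) (hp : 1 ≤ p) (k : ℕ) (hk : 0 < k) (hkn : k ≤ n)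
    (ε : ℝ) (hε : ε ∈ Set.Icc (0 : ℝ) 1) (X : Submodule ℝ (Fin n → ℝ))
    (hX : SpreadSubspace p (2 * (k : ℝ)) ε X)
    (q : ℝ) (hq : 1 ≤ q) (hqp : q < p) :
    SpreadSubspace q k (ε ^ 2 * ((k : ℝ) / n) ^ (1 / q)) X :=
  spread_p_to_q_general p k hk hkn ε hε X hX q hq hqp
end

section
/- Let A ∈ M_{m,n,s,t} with s, t ≥ 2, and let ℓ ≥ 1. Suppose there exists a vertex v* ∈ V_L such that the ball B_{G_A}(v*, 2ℓ+1) contains no cycle. Then there exists a nonzero vector x ∈ ℝ^n with |supp(x)| ≤ 1 + 2 t (t−1)^{ℓ−1} (s−1)^{ℓ} such that for every p ≥ 1, ‖Ax‖_p^p ≤ t (t−1)^{ℓ} (s−1)^{(1−p)ℓ} · ‖x‖_p^p. -/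
open Finset

/-!
Put `x_u = β^(d(v*,u)/2) σ(u)` with `β = -1/(s-1)` on the left vertices `u` at distance at most
`2ℓ` from `v*`, where `σ(u)` is the product of the entries of `A` along the geodesic from `v*` to
`u` (unique, since the ball is a tree). A row `r` at odd distance `k < 2ℓ+1` has one parent and
`s-1` children, whose contributions `A_{r,u} x_u` equal `σ(r) β^(k/2)` and `σ(r) β^(k/2+1)`
respectively, so they cancel. Only the rows at distance exactly `2ℓ+1` survive, each with
`|(Ax)_r| = (s-1)^(-ℓ)`, and there are at most `t((t-1)(s-1))^ℓ` of them, while `x_{v*} = 1`.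
The support lies in the even layers up to `2ℓ`, whose sizes grow geometrically with ratio
`(t-1)(s-1) ≥ 2` once `s ≥ 3`. For `s = 2` the unit vector `e_{v*}` works, as `‖A e_{v*}‖_p^p = t`.
-/
open Finset SimpleGraph
open scoped Matrix

namespace SimpleGraph

variable {V : Type*} {G : SimpleGraph V} {a w y : V}

lemma dist_le_dist_add_one_of_adj (h : G.Adj w y) : G.dist a y ≤ G.dist a w + 1 := by
  simpa [dist_eq_one_iff_adj.mpr h] using h.reachable.dist_triangle_right a

lemma exists_adj_dist_eq_of_dist_eq_succ {k : ℕ} (h : G.dist a w = k + 1) :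
    ∃ y, G.Adj y w ∧ G.dist a y = k := by
  obtain ⟨p, hp⟩ := exists_walk_of_dist_ne_zero (G := G) (u := a) (v := w) (by omega)
  have hnil : ¬ p.Nil := by simp [← Walk.length_eq_zero_iff, hp, h]
  have hadj := p.adj_penultimate hnil
  refine ⟨p.penultimate, hadj, le_antisymm ?_ ?_⟩
  · have := G.dist_le p.dropLast
    rw [Walk.length_dropLast, hp, h] at this
    simpa using this
  · have := dist_le_dist_add_one_of_adj (a := a) hadj
    omega

noncomputable def Reachable.geodesic (h : G.Reachable a w) : G.Walk a w :=
  h.exists_walk_length_eq_dist.choose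

lemma Reachable.length_geodesic (h : G.Reachable a w) : h.geodesic.length = G.dist a w :=
  h.exists_walk_length_eq_dist.choose_spec

section Weight

variable {M : Type*} [Monoid M]

def Walk.weight (σ : V → V → M) {u v : V} (p : G.Walk u v) : M :=
  (p.darts.map fun d => σ d.fst d.snd).prod

lemma Walk.weight_concat (σ : V → V → M) {u v : V} (p : G.Walk u v) (h : G.Adj v w) :
    (p.concat h).weight σ = p.weight σ * σ v w := by
  simp [Walk.weight, Walk.darts_concat]

lemma Walk.abs_weight {σ : V → V → ℝ} (hσ : ∀ x y, G.Adj x y → |σ x y| = 1) {u v : V}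
    (p : G.Walk u v) : |p.weight σ| = 1 := by
  induction p with
  | nil => simp [Walk.weight]
  | cons h p ih => simp_all [Walk.weight, abs_mul]

variable (G) in
open Classical in
/-- Junk value `1` when `w` is not reachable from `a`. -/
noncomputable def geodesicWeight (σ : V → V → M) (a w : V) : M :=
  if h : G.Reachable a w then h.geodesic.weight σ else 1

lemma Reachable.geodesicWeight_eq (σ : V → V → M) (h : G.Reachable a w) :
    G.geodesicWeight σ a w = h.geodesic.weight σ :=
  dif_pos h

end Weight

end SimpleGraph

namespace BallAcyclic

variable {V : Type*} {G : SimpleGraph V} {a w y : V} {R : ℕ}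

lemma walk_eq_of_length_eq_dist (hac : BallAcyclic G a R) {p q : G.Walk a w}
    (hp : p.length = G.dist a w) (hq : q.length = G.dist a w) (hR : G.dist a w ≤ R) :
    p = q := by
  classical
  have hball : ∀ {r : G.Walk a w}, r.length = G.dist a w →
      ∀ x ∈ r.support, x ∈ graphBall G a R :=
    fun {r} hr x hx => ⟨(r.takeUntil x hx).reachable,
      (G.dist_le _).trans ((r.length_takeUntil_le_length hx).trans (hr.trans_le hR))⟩
  have hpath : ∀ {r : G.Walk a w} (hr : r.length = G.dist a w), (r.induce _ (hball hr)).IsPath :=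
    fun {r} hr => Walk.IsPath.of_map (f := (Embedding.induce _).toHom)
      (by rw [Walk.map_induce]; exact r.isPath_of_length_eq_dist hr)
  have := (hac.subsingleton_path _ _).elim ⟨_, hpath hp⟩ ⟨_, hpath hq⟩
  simpa using congrArg (fun r => r.val.map (Embedding.induce _).toHom) this

lemma eq_of_adj_of_dist_eq_succ (hac : BallAcyclic G a R) {y₁ y₂ : V} (h₁ : G.Adj y₁ w)
    (h₂ : G.Adj y₂ w) (hd₁ : G.dist a w = G.dist a y₁ + 1) (hd₂ : G.dist a w = G.dist a y₂ + 1)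
    (hR : G.dist a w ≤ R) : y₁ = y₂ := by
  have hw : G.Reachable a w := Reachable.of_dist_ne_zero (by omega)
  obtain ⟨p₁, hp₁⟩ := (hw.trans h₁.symm.reachable).exists_walk_length_eq_dist
  obtain ⟨p₂, hp₂⟩ := (hw.trans h₂.symm.reachable).exists_walk_length_eq_dist
  obtain ⟨rfl, -⟩ := Walk.concat_inj <| hac.walk_eq_of_length_eq_dist (p := p₁.concat h₁)
    (q := p₂.concat h₂) (by simp [hp₁, hd₁]) (by simp [hp₂, hd₂]) hR
  rfl

lemma geodesicWeight_of_adj {M : Type*} [Monoid M] (σ : V → V → M) (hac : BallAcyclic G a R)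
    (hadj : G.Adj w y) (hw : G.Reachable a w) (hy : G.dist a y = G.dist a w + 1)
    (hR : G.dist a y ≤ R) :
    G.geodesicWeight σ a y = G.geodesicWeight σ a w * σ w y := by
  have hgeo := hac.walk_eq_of_length_eq_dist (p := hw.geodesic.concat hadj)
    (q := (hw.trans hadj.reachable).geodesic) (by simp [hw.length_geodesic, hy])
    (Reachable.length_geodesic _) hR
  rw [(hw.trans hadj.reachable).geodesicWeight_eq, hw.geodesicWeight_eq, ← hgeo,
    Walk.weight_concat]

end BallAcyclic

namespace SimpleGraph

variable {V : Type*} [Fintype V] {G : SimpleGraph V} {a w : V}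

variable (G) in
open Classical in
noncomputable def layer (a : V) (k : ℕ) : Finset V :=
  {w | G.Reachable a w ∧ G.dist a w = k}

@[simp] lemma mem_layer {k : ℕ} : w ∈ G.layer a k ↔ G.Reachable a w ∧ G.dist a w = k := by
  simp [layer]

lemma card_layer_zero_le : #(G.layer a 0) ≤ 1 :=
  card_le_one.mpr fun w hw w' hw' => by
    simp only [mem_layer] at hw hw'
    rw [← hw.1.dist_eq_zero_iff.mp hw.2, ← hw'.1.dist_eq_zero_iff.mp hw'.2]

lemma layer_one [DecidableRel G.Adj] : G.layer a 1 = G.neighborFinset a := by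
  ext w
  simpa using fun h : G.Adj a w => h.reachable

lemma card_layer_succ_le [DecidableRel G.Adj] {k D : ℕ} (hk : k ≠ 0)
    (hdeg : ∀ w ∈ G.layer a k, G.degree w ≤ D + 1) :
    #(G.layer a (k + 1)) ≤ #(G.layer a k) * D := by
  classical
  have key := card_mul_le_card_mul (m := 1) (n := D) (fun w y => G.Adj y w)
    (s := G.layer a (k + 1)) (t := G.layer a k) ?_ ?_
  · simpa using key
  · intro w hw
    obtain ⟨y, hyw, hy⟩ := exists_adj_dist_eq_of_dist_eq_succ (mem_layer.mp hw).2
    exact one_le_card.mpr ⟨y, by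
      simpa [bipartiteAbove, hyw, hy] using (mem_layer.mp hw).1.trans hyw.symm.reachable⟩
  · intro y hy
    obtain ⟨y', hy'y, hy'⟩ := exists_adj_dist_eq_of_dist_eq_succ (k := k - 1)
      (by rw [(mem_layer.mp hy).2]; omega)
    have hsub : bipartiteBelow (fun w y => G.Adj y w) (G.layer a (k + 1)) y ⊆
        (G.neighborFinset y).erase y' := by
      intro w hw
      simp only [bipartiteBelow, mem_filter, mem_layer] at hw
      refine mem_erase.mpr ⟨?_, by simpa using hw.2⟩
      rintro rfl
      omega
    calc _ ≤ #((G.neighborFinset y).erase y') := card_le_card hsub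
      _ = G.degree y - 1 := by
          rw [card_erase_of_mem (by simpa using hy'y.symm), card_neighborFinset_eq_degree]
      _ ≤ D := by have := hdeg y hy; omega

end SimpleGraph

section BipGraph

variable {n m : ℕ} {N : Fin n → Finset (Fin m)} {u u' : Fin n} {r r' : Fin m}

@[simp] lemma bipGraph_adj_inl_inr : (bipGraph N).Adj (.inl u) (.inr r) ↔ r ∈ N u := Iff.rfl

@[simp] lemma bipGraph_adj_inr_inl : (bipGraph N).Adj (.inr r) (.inl u) ↔ r ∈ N u := Iff.rfl

@[simp] lemma bipGraph_not_adj_inl_inl : ¬ (bipGraph N).Adj (.inl u) (.inl u') := id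

@[simp] lemma bipGraph_not_adj_inr_inr : ¬ (bipGraph N).Adj (.inr r) (.inr r') := id

variable (N) in
def bipGraphColoring : (bipGraph N).Coloring Bool :=
  Coloring.mk Sum.isRight (by rintro (u | r) (u' | r') h <;> simp_all)

@[simp] lemma bipGraphColoring_apply (w : Fin n ⊕ Fin m) : bipGraphColoring N w = w.isRight :=
  rfl

lemma even_dist_bipGraph_iff {v : Fin n} {w : Fin n ⊕ Fin m}
    (hw : (bipGraph N).Reachable (.inl v) w) :
    Even ((bipGraph N).dist (.inl v) w) ↔ w.isLeft := by
  obtain ⟨p, hp⟩ := hw.exists_walk_length_eq_dist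
  rw [← hp, (bipGraphColoring N).even_length_iff_congr p]
  cases w <;> simp

lemma bipGraph_dist_inl_mod_two {v : Fin n} (h : (bipGraph N).Reachable (.inl v) (.inl u)) :
    (bipGraph N).dist (.inl v) (.inl u) % 2 = 0 :=
  Nat.even_iff.mp ((even_dist_bipGraph_iff h).mpr rfl)

lemma bipGraph_dist_inr_mod_two {v : Fin n} (h : (bipGraph N).Reachable (.inl v) (.inr r)) :
    (bipGraph N).dist (.inl v) (.inr r) % 2 = 1 :=
  Nat.odd_iff.mp (Nat.not_even_iff_odd.mp (by simpa using (even_dist_bipGraph_iff h).not))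

lemma bipGraph_degree_inl [DecidableRel (bipGraph N).Adj] (u : Fin n) :
    (bipGraph N).degree (.inl u) = #(N u) := by
  have : (bipGraph N).neighborFinset (.inl u) = (N u).map .inr := by ext (u' | r) <;> simp
  rw [← card_neighborFinset_eq_degree, this, card_map]

lemma bipGraph_degree_inr [DecidableRel (bipGraph N).Adj] (r : Fin m) :
    (bipGraph N).degree (.inr r) = rightDeg N r := by
  have : (bipGraph N).neighborFinset (.inr r) = ({u | r ∈ N u} : Finset _).map .inl := by
    ext (u | r') <;> simp
  rw [← card_neighborFinset_eq_degree, this, card_map, rightDeg]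

end BipGraph

lemma Nat.geomSum_range_le_two_mul_pow {q : ℕ} (hq : 2 ≤ q) (ℓ : ℕ) :
    ∑ j ∈ range ℓ, q ^ j ≤ 2 * q ^ (ℓ - 1) := by
  cases ℓ with
  | zero => simp
  | succ ℓ =>
    have := Nat.geomSum_lt hq (s := range ℓ) (n := ℓ) (by simp)
    rw [sum_range_succ, Nat.add_sub_cancel]
    omega

section LayerCount

variable {n m : ℕ} {N : Fin n → Finset (Fin m)} {s t : ℕ}

lemma bipGraph_degree_le_of_mem_layer [DecidableRel (bipGraph N).Adj] (hN : ∀ u, #(N u) ≤ t)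
    (hN' : ∀ r, rightDeg N r ≤ s) {v : Fin n} {k : ℕ} {w : Fin n ⊕ Fin m}
    (hw : w ∈ (bipGraph N).layer (.inl v) k) :
    (bipGraph N).degree w ≤ if Even k then t else s := by
  obtain ⟨hre, rfl⟩ := mem_layer.mp hw
  rcases w with u | r
  · simpa [(even_dist_bipGraph_iff hre).mpr rfl, bipGraph_degree_inl] using hN u
  · have : ¬ Even ((bipGraph N).dist (.inl v) (.inr r)) := by
      simpa using (even_dist_bipGraph_iff hre).not
    simpa [this, bipGraph_degree_inr] using hN' r

lemma card_layer_bipGraph_succ_le (hN : ∀ u, #(N u) ≤ t) (hN' : ∀ r, rightDeg N r ≤ s)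
    (v : Fin n) {k : ℕ} (hk : k ≠ 0) :
    #((bipGraph N).layer (.inl v) (k + 1)) ≤
      #((bipGraph N).layer (.inl v) k) * ((if Even k then t else s) - 1) := by
  classical
  exact card_layer_succ_le hk fun w hw => by
    have := bipGraph_degree_le_of_mem_layer hN hN' hw
    omega

lemma card_layer_bipGraph_odd_le (hN : ∀ u, #(N u) ≤ t) (hN' : ∀ r, rightDeg N r ≤ s)
    (v : Fin n) (j : ℕ) :
    #((bipGraph N).layer (.inl v) (2 * j + 1)) ≤ t * ((t - 1) * (s - 1)) ^ j := by
  classical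
  induction j with
  | zero => simpa [layer_one, bipGraph_degree_inl] using hN v
  | succ j ih =>
    have h₁ := card_layer_bipGraph_succ_le hN hN' v (k := 2 * j + 1) (by omega)
    have h₂ := card_layer_bipGraph_succ_le hN hN' v (k := 2 * j + 1 + 1) (by omega)
    simp only [Nat.not_even_bit1, if_false, Nat.even_add_one, not_false_eq_true, if_true]
      at h₁ h₂
    calc _ ≤ #((bipGraph N).layer (.inl v) (2 * j + 1)) * (s - 1) * (t - 1) :=
          h₂.trans (Nat.mul_le_mul_right _ h₁)
      _ ≤ t * ((t - 1) * (s - 1)) ^ j * (s - 1) * (t - 1) := by gcongr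
      _ = t * ((t - 1) * (s - 1)) ^ (j + 1) := by ring

lemma card_layer_bipGraph_even_le (hN : ∀ u, #(N u) ≤ t) (hN' : ∀ r, rightDeg N r ≤ s)
    (v : Fin n) (j : ℕ) :
    #((bipGraph N).layer (.inl v) (2 * j + 2)) ≤ t * (s - 1) * ((t - 1) * (s - 1)) ^ j := by
  have h := card_layer_bipGraph_succ_le hN hN' v (k := 2 * j + 1) (by omega)
  simp only [Nat.not_even_bit1, if_false] at h
  calc _ ≤ #((bipGraph N).layer (.inl v) (2 * j + 1)) * (s - 1) := h
    _ ≤ t * ((t - 1) * (s - 1)) ^ j * (s - 1) := by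
        gcongr
        exact card_layer_bipGraph_odd_le hN hN' v j
    _ = _ := by ring

lemma card_biUnion_layer_bipGraph_even_le (hN : ∀ u, #(N u) ≤ t)
    (hN' : ∀ r, rightDeg N r ≤ s) (hq : 2 ≤ (t - 1) * (s - 1)) (v : Fin n) {ℓ : ℕ} (hℓ : 1 ≤ ℓ) :
    #((range (ℓ + 1)).biUnion fun j => (bipGraph N).layer (.inl v) (2 * j)) ≤
      1 + 2 * t * (t - 1) ^ (ℓ - 1) * (s - 1) ^ ℓ := by
  calc _ ≤ ∑ j ∈ range (ℓ + 1), #((bipGraph N).layer (.inl v) (2 * j)) := card_biUnion_le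
    _ = ∑ j ∈ range ℓ, #((bipGraph N).layer (.inl v) (2 * j + 2)) +
          #((bipGraph N).layer (.inl v) 0) := sum_range_succ' _ _
    _ ≤ t * (s - 1) * ∑ j ∈ range ℓ, ((t - 1) * (s - 1)) ^ j + 1 := by
        rw [mul_sum]
        exact add_le_add (sum_le_sum fun j _ => card_layer_bipGraph_even_le hN hN' v j)
          card_layer_zero_le
    _ ≤ t * (s - 1) * (2 * ((t - 1) * (s - 1)) ^ (ℓ - 1)) + 1 := by
        gcongr; exact Nat.geomSum_range_le_two_mul_pow hq ℓ
    _ = 1 + 2 * t * (t - 1) ^ (ℓ - 1) * (s - 1) ^ ℓ := by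
        obtain ⟨ℓ, rfl⟩ := Nat.exists_eq_add_of_le' hℓ
        simp only [Nat.add_sub_cancel]
        ring

end LayerCount

section LpNorm

variable {ι : Type*} [Fintype ι] {p : ℝ}

lemma lpNorm_rpow_eq_sum (hp : p ≠ 0) (x : ι → ℝ) : lpNorm p x ^ p = ∑ i, |x i| ^ p := by
  rw [lpNorm, ← Real.rpow_mul (sum_nonneg fun i _ => by positivity), one_div,
    inv_mul_cancel₀ hp, Real.rpow_one]

lemma abs_rpow_le_lpNorm_rpow (hp : p ≠ 0) (x : ι → ℝ) (i : ι) :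
    |x i| ^ p ≤ lpNorm p x ^ p := by
  rw [lpNorm_rpow_eq_sum hp]
  exact single_le_sum (f := fun i => |x i| ^ p) (fun i _ => by positivity) (mem_univ i)

end LpNorm

section TreeVector

variable {m n s t : ℕ} {A : Matrix (Fin m) (Fin n) ℝ} {u : Fin n} {r : Fin m}

local notation "𝒢" => bipGraph (matNbrs A)

@[simp] lemma mem_matNbrs : r ∈ matNbrs A u ↔ A r u ≠ 0 := by simp [matNbrs]

lemma Biregular.mul_self_eq_one (hA : Biregular s t A) (h : A r u ≠ 0) : A r u * A r u = 1 := by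
  rcases hA.1 r u with h' | h' | h' <;> simp_all

lemma Biregular.abs_eq_one (hA : Biregular s t A) (h : A r u ≠ 0) : |A r u| = 1 := by
  rcases hA.1 r u with h' | h' | h' <;> simp_all

lemma Biregular.card_matNbrs (hA : Biregular s t A) (u : Fin n) : #(matNbrs A u) = t :=
  hA.2.2 u

lemma Biregular.rightDeg_matNbrs (hA : Biregular s t A) (r : Fin m) :
    rightDeg (matNbrs A) r = s := by
  simpa [rightDeg] using hA.2.1 r

def edgeEntry (A : Matrix (Fin m) (Fin n) ℝ) : Fin n ⊕ Fin m → Fin n ⊕ Fin m → ℝ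
  | .inl u, .inr r | .inr r, .inl u => A r u
  | _, _ => 1

lemma Biregular.abs_edgeEntry (hA : Biregular s t A) {x y : Fin n ⊕ Fin m}
    (h : (𝒢).Adj x y) : |edgeEntry A x y| = 1 := by
  rcases x with u | r <;> rcases y with u' | r' <;> simp_all [edgeEntry]
  all_goals exact hA.abs_eq_one h

variable (A) in
open Classical in
noncomputable def treeVec (v : Fin n) (ℓ : ℕ) (β : ℝ) : Fin n → ℝ := fun u =>
  if (𝒢).Reachable (.inl v) (.inl u) ∧ (𝒢).dist (.inl v) (.inl u) ≤ 2 * ℓ then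
    β ^ ((𝒢).dist (.inl v) (.inl u) / 2) * (𝒢).geodesicWeight (edgeEntry A) (.inl v) (.inl u)
  else 0

lemma treeVec_self (v : Fin n) (ℓ : ℕ) (β : ℝ) : treeVec A v ℓ β v = 1 := by
  have hv : (𝒢).Reachable (.inl v) (.inl v) := .rfl
  have hnil : hv.geodesic.Nil := by simp [← Walk.length_eq_zero_iff, hv.length_geodesic]
  simp [treeVec, hv.geodesicWeight_eq, hnil.eq_nil, Walk.weight]

lemma treeVec_ne_zero (v : Fin n) (ℓ : ℕ) (β : ℝ) : treeVec A v ℓ β ≠ 0 :=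
  fun h => by simpa [h] using treeVec_self (A := A) v ℓ β

variable {v : Fin n} {ℓ : ℕ} {β : ℝ}

lemma mul_treeVec_of_ne_zero (hA : Biregular s t A) (hac : BallAcyclic 𝒢 (.inl v) (2 * ℓ + 1))
    (hr : (𝒢).Reachable (.inl v) (.inr r)) (hk : (𝒢).dist (.inl v) (.inr r) ≤ 2 * ℓ + 1)
    (hu : A r u ≠ 0) :
    A r u * treeVec A v ℓ β u =
      if (𝒢).dist (.inl v) (.inl u) ≤ 2 * ℓ then
        β ^ ((𝒢).dist (.inl v) (.inl u) / 2) *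
          (𝒢).geodesicWeight (edgeEntry A) (.inl v) (.inr r)
      else 0 := by
  have hadj : (𝒢).Adj (.inl u) (.inr r) := mem_matNbrs.mpr hu
  have hu' := hr.trans hadj.symm.reachable
  have hev := bipGraph_dist_inl_mod_two hu'
  have hodd := bipGraph_dist_inr_mod_two hr
  rcases hadj.diff_dist_adj (u := .inl v) with h | h | h
  · omega
  · rw [treeVec, if_pos ⟨hu', by omega⟩, if_pos (by omega),
      hac.geodesicWeight_of_adj _ hadj hu' h (by omega), edgeEntry]
    ring
  · split_ifs with hle
    · rw [treeVec, if_pos ⟨hu', hle⟩,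
        hac.geodesicWeight_of_adj _ hadj.symm hr (by omega) (by omega), edgeEntry]
      linear_combination (β ^ ((𝒢).dist (.inl v) (.inl u) / 2) *
        (𝒢).geodesicWeight (edgeEntry A) (.inl v) (.inr r)) * hA.mul_self_eq_one hu
    · rw [treeVec, if_neg (by omega), mul_zero]

lemma dist_eq_succ_of_ne_zero_of_ne (hac : BallAcyclic 𝒢 (.inl v) (2 * ℓ + 1))
    (hr : (𝒢).Reachable (.inl v) (.inr r)) (hk : (𝒢).dist (.inl v) (.inr r) ≤ 2 * ℓ + 1)
    {u₀ : Fin n} (hu₀ : A r u₀ ≠ 0)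
    (hd₀ : (𝒢).dist (.inl v) (.inr r) = (𝒢).dist (.inl v) (.inl u₀) + 1)
    (hu : A r u ≠ 0) (hne : u ≠ u₀) :
    (𝒢).dist (.inl v) (.inl u) = (𝒢).dist (.inl v) (.inr r) + 1 := by
  have hadj : (𝒢).Adj (.inl u) (.inr r) := mem_matNbrs.mpr hu
  have hev := bipGraph_dist_inl_mod_two (hr.trans hadj.symm.reachable)
  have hodd := bipGraph_dist_inr_mod_two hr
  rcases hadj.diff_dist_adj (u := .inl v) with h | h | h
  · omega
  · exact absurd (Sum.inl_injective
      (hac.eq_of_adj_of_dist_eq_succ hadj (mem_matNbrs.mpr hu₀) h hd₀ hk)) hne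
  · omega

lemma mulVec_treeVec_apply (hA : Biregular s t A) (hac : BallAcyclic 𝒢 (.inl v) (2 * ℓ + 1))
    (hr : (𝒢).Reachable (.inl v) (.inr r)) (hk : (𝒢).dist (.inl v) (.inr r) ≤ 2 * ℓ + 1) :
    (A *ᵥ treeVec A v ℓ β) r =
      (β ^ ((𝒢).dist (.inl v) (.inr r) / 2) +
        if (𝒢).dist (.inl v) (.inr r) + 1 ≤ 2 * ℓ then
          ((s : ℝ) - 1) * β ^ ((𝒢).dist (.inl v) (.inr r) / 2 + 1)
        else 0) * (𝒢).geodesicWeight (edgeEntry A) (.inl v) (.inr r) := by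
  set k := (𝒢).dist (.inl v) (.inr r)
  set φ := (𝒢).geodesicWeight (edgeEntry A) (.inl v) (.inr r)
  have hodd : k % 2 = 1 := bipGraph_dist_inr_mod_two hr
  obtain ⟨u₀ | r', hadj₀, hd₀⟩ := exists_adj_dist_eq_of_dist_eq_succ (k := k - 1)
    (by omega : (𝒢).dist (.inl v) (.inr r) = k - 1 + 1)
  swap
  · simp at hadj₀
  have hu₀ : A r u₀ ≠ 0 := mem_matNbrs.mp hadj₀
  set F : Finset (Fin n) := {u | A r u ≠ 0}
  have hcard : ((#(F.erase u₀) : ℕ) : ℝ) = (s : ℝ) - 1 := by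
    have hF : #F = s := hA.2.1 r
    have hmem : u₀ ∈ F := by simpa [F] using hu₀
    rw [card_erase_of_mem hmem, hF, Nat.cast_sub (by rw [← hF]; exact card_pos.mpr ⟨_, hmem⟩)]
    simp
  calc (A *ᵥ treeVec A v ℓ β) r = ∑ u ∈ F, A r u * treeVec A v ℓ β u :=
        (sum_filter_of_ne (s := univ) (f := fun u => A r u * treeVec A v ℓ β u) fun u _ h =>
          left_ne_zero_of_mul h).symm
    _ = A r u₀ * treeVec A v ℓ β u₀ + ∑ u ∈ F.erase u₀, A r u * treeVec A v ℓ β u :=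
        (add_sum_erase _ _ (by simpa [F] using hu₀)).symm
    _ = β ^ (k / 2) * φ + ∑ u ∈ F.erase u₀,
          if k + 1 ≤ 2 * ℓ then β ^ (k / 2 + 1) * φ else 0 := by
        rw [mul_treeVec_of_ne_zero hA hac hr hk hu₀, if_pos (by omega), hd₀,
          show (k - 1) / 2 = k / 2 by omega]
        congr 1
        refine sum_congr rfl fun u hu => ?_
        obtain ⟨hne, hu⟩ := mem_erase.mp hu
        have hu : A r u ≠ 0 := (mem_filter.mp hu).2
        rw [mul_treeVec_of_ne_zero hA hac hr hk hu,
          dist_eq_succ_of_ne_zero_of_ne hac hr hk hu₀ (by omega) hu hne,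
          show (k + 1) / 2 = k / 2 + 1 by omega]
    _ = _ := by
        rw [sum_const, nsmul_eq_mul, hcard]
        split_ifs <;> ring

lemma mulVec_treeVec_eq_zero_of_notMem_graphBall
    (hr : .inr r ∉ graphBall 𝒢 (.inl v) (2 * ℓ + 1)) :
    (A *ᵥ treeVec A v ℓ β) r = 0 := by
  simp only [Matrix.mulVec, dotProduct]
  refine sum_eq_zero fun u _ => ?_
  by_cases hu : A r u = 0
  · rw [hu, zero_mul]
  have hadj : (𝒢).Adj (.inl u) (.inr r) := mem_matNbrs.mpr hu
  rw [treeVec, if_neg, mul_zero]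
  rintro ⟨hu', hd⟩
  exact hr ⟨hu'.trans hadj.reachable, (dist_le_dist_add_one_of_adj hadj).trans (by omega)⟩

lemma mulVec_treeVec_eq_zero (hA : Biregular s t A) (hs : 2 ≤ s)
    (hac : BallAcyclic 𝒢 (.inl v) (2 * ℓ + 1))
    (hd : (𝒢).dist (.inl v) (.inr r) ≠ 2 * ℓ + 1) :
    (A *ᵥ treeVec A v ℓ (-((s : ℝ) - 1)⁻¹)) r = 0 := by
  by_cases hr : .inr r ∈ graphBall 𝒢 (.inl v) (2 * ℓ + 1)
  · obtain ⟨hr, hk⟩ := hr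
    have hodd := bipGraph_dist_inr_mod_two hr
    have hs : (s : ℝ) - 1 ≠ 0 := by
      rw [sub_ne_zero, Nat.cast_ne_one]
      omega
    rw [mulVec_treeVec_apply hA hac hr hk, if_pos (by omega), pow_succ]
    field_simp
    ring
  · exact mulVec_treeVec_eq_zero_of_notMem_graphBall hr

lemma abs_mulVec_treeVec (hA : Biregular s t A) (hs : 1 ≤ s)
    (hac : BallAcyclic 𝒢 (.inl v) (2 * ℓ + 1))
    (hd : (𝒢).dist (.inl v) (.inr r) = 2 * ℓ + 1) :
    |(A *ᵥ treeVec A v ℓ (-((s : ℝ) - 1)⁻¹)) r| = ((s : ℝ) - 1)⁻¹ ^ ℓ := by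
  have hr : (𝒢).Reachable (.inl v) (.inr r) := Reachable.of_dist_ne_zero (by omega)
  rw [mulVec_treeVec_apply hA hac hr hd.le, if_neg (by omega), hd, add_zero,
    show (2 * ℓ + 1) / 2 = ℓ by omega, abs_mul, hr.geodesicWeight_eq,
    Walk.abs_weight (fun _ _ => hA.abs_edgeEntry), abs_pow, abs_neg, abs_inv,
    abs_of_nonneg (sub_nonneg.mpr (Nat.one_le_cast.mpr hs)), mul_one]

lemma ncard_support_treeVec_le (hA : Biregular s t A) (hq : 2 ≤ (t - 1) * (s - 1))
    (hℓ : 1 ≤ ℓ) (β : ℝ) :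
    (Function.support (treeVec A v ℓ β)).ncard ≤
      1 + 2 * t * (t - 1) ^ (ℓ - 1) * (s - 1) ^ ℓ := by
  refine (Set.ncard_le_ncard_of_injOn Sum.inl (fun u hu => ?_) Sum.inl_injective.injOn).trans
    ((Set.ncard_coe_finset _).trans_le (card_biUnion_layer_bipGraph_even_le
      (fun u => (hA.card_matNbrs u).le) (fun r => (hA.rightDeg_matNbrs r).le) hq v hℓ))
  have hu : (𝒢).Reachable (.inl v) (.inl u) ∧ (𝒢).dist (.inl v) (.inl u) ≤ 2 * ℓ := by
    by_contra h
    exact hu (by simp [treeVec, h])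
  have hev := bipGraph_dist_inl_mod_two hu.1
  simp only [coe_biUnion, coe_range, Set.mem_iUnion, Set.mem_Iio, mem_coe, mem_layer]
  exact ⟨(𝒢).dist (.inl v) (.inl u) / 2, by omega, hu.1, by omega⟩

lemma lpNorm_mulVec_treeVec_rpow_le (hA : Biregular s t A) (hs : 2 ≤ s) (ht : 1 ≤ t)
    (hac : BallAcyclic 𝒢 (.inl v) (2 * ℓ + 1)) {p : ℝ} (hp : p ≠ 0) :
    lpNorm p (A *ᵥ treeVec A v ℓ (-((s : ℝ) - 1)⁻¹)) ^ p ≤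
      t * ((t : ℝ) - 1) ^ ℓ * ((s : ℝ) - 1) ^ ((1 - p) * ℓ) *
        lpNorm p (treeVec A v ℓ (-((s : ℝ) - 1)⁻¹)) ^ p := by
  set x := treeVec A v ℓ (-((s : ℝ) - 1)⁻¹)
  set c : ℝ := (s : ℝ) - 1
  have hc : 0 < c := by
    have : (2 : ℝ) ≤ s := by exact_mod_cast hs
    linarith
  set R : Finset (Fin m) := {r | (𝒢).dist (.inl v) (.inr r) = 2 * ℓ + 1}
  have hR : #R ≤ t * ((t - 1) * (s - 1)) ^ ℓ := by
    refine (card_le_card_of_injOn Sum.inr (fun r hr => mem_layer.mpr ?_)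
      Sum.inr_injective.injOn).trans (card_layer_bipGraph_odd_le
        (fun u => (hA.card_matNbrs u).le) (fun r => (hA.rightDeg_matNbrs r).le) v ℓ)
    have hr : (𝒢).dist (.inl v) (.inr r) = 2 * ℓ + 1 := (mem_filter.mp hr).2
    exact ⟨Reachable.of_dist_ne_zero (by omega), hr⟩
  have hAx : lpNorm p (A *ᵥ x) ^ p = #R * (c⁻¹ ^ ℓ) ^ p := by
    rw [lpNorm_rpow_eq_sum hp, ← nsmul_eq_mul, ← sum_const, sum_filter]
    refine sum_congr rfl fun r _ => ?_
    split_ifs with h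
    · rw [abs_mulVec_treeVec hA (by omega) hac h]
    · rw [mulVec_treeVec_eq_zero hA hs hac h, abs_zero, Real.zero_rpow hp]
  have hx : 1 ≤ lpNorm p x ^ p := by
    simpa [x, treeVec_self] using abs_rpow_le_lpNorm_rpow hp x v
  have hpow : c ^ ℓ * (c⁻¹ ^ ℓ) ^ p = c ^ ((1 - p) * ℓ) := by
    rw [inv_pow, Real.inv_rpow (by positivity), ← Real.rpow_natCast, ← Real.rpow_mul hc.le,
      ← Real.rpow_neg hc.le, ← Real.rpow_add hc]
    ring_nf
  have ht' : (0 : ℝ) ≤ t - 1 := by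
    have : (1 : ℝ) ≤ t := by exact_mod_cast ht
    linarith
  calc lpNorm p (A *ᵥ x) ^ p = #R * (c⁻¹ ^ ℓ) ^ p := hAx
    _ ≤ ((t * ((t - 1) * (s - 1)) ^ ℓ : ℕ) : ℝ) * (c⁻¹ ^ ℓ) ^ p := by gcongr
    _ = t * ((t : ℝ) - 1) ^ ℓ * (c ^ ℓ * (c⁻¹ ^ ℓ) ^ p) := by
        rw [mul_pow]
        push_cast [c, Nat.cast_sub ht, Nat.cast_sub (by omega : 1 ≤ s)]
        ring
    _ = t * ((t : ℝ) - 1) ^ ℓ * c ^ ((1 - p) * ℓ) := by rw [hpow]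
    _ ≤ t * ((t : ℝ) - 1) ^ ℓ * c ^ ((1 - p) * ℓ) * lpNorm p x ^ p :=
        le_mul_of_one_le_right (by positivity) hx

lemma lpNorm_mulVec_single_rpow (hA : Biregular s t A) {p : ℝ} (hp : p ≠ 0) (v : Fin n) :
    lpNorm p (A *ᵥ Pi.single v 1) ^ p = t := by
  rw [lpNorm_rpow_eq_sum hp, Matrix.mulVec_single_one]
  calc ∑ r, |A.col v r| ^ p = ∑ r, if A r v ≠ 0 then (1 : ℝ) else 0 := by
        refine sum_congr rfl fun r _ => ?_
        split_ifs with h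
        · simp [hA.abs_eq_one h]
        · simp [not_not.mp h, Real.zero_rpow hp]
    _ = t := by
        rw [sum_boole]
        exact_mod_cast hA.2.2 v

end TreeVector

/-- **Tree vectors.** If `A ∈ M_{m,n,s,t}` with `s, t ≥ 2`, `ℓ ≥ 1`, and some `v* ∈ V_L`
has a cycle-free ball of radius `2ℓ+1` in `G_A`, then there is a nonzero
`x` with `|supp(x)| ≤ 1 + 2t(t-1)^(ℓ-1)(s-1)^ℓ` and
`‖Ax‖_p^p ≤ t (t-1)^ℓ (s-1)^((1-p)ℓ) ‖x‖_p^p` for every `p ≥ 1`. -/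
theorem tree_vector {m n : ℕ} (s t : ℕ) (hs : 2 ≤ s) (ht : 2 ≤ t) (ℓ : ℕ) (hℓ : 1 ≤ ℓ)
    (A : Matrix (Fin m) (Fin n) ℝ) (hA : Biregular s t A)
    (hball : ∃ v : Fin n, BallAcyclic (bipGraph (matNbrs A)) (Sum.inl v) (2 * ℓ + 1)) :
    ∃ x : Fin n → ℝ, x ≠ 0 ∧
      (Function.support x).ncard ≤ 1 + 2 * t * (t - 1) ^ (ℓ - 1) * (s - 1) ^ ℓ ∧
      ∀ p : ℝ, 1 ≤ p →
        lpNorm p (A.mulVec x) ^ p ≤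
          (t : ℝ) * ((t : ℝ) - 1) ^ ℓ * ((s : ℝ) - 1) ^ ((1 - p) * ℓ) * lpNorm p x ^ p := by
  obtain ⟨v, hac⟩ := hball
  rcases (show s = 2 ∨ 3 ≤ s by omega) with rfl | hs
  · refine ⟨Pi.single v 1, by simp, by simp [Pi.support_single_of_ne], fun p hp => ?_⟩
    have hx : 1 ≤ lpNorm p (Pi.single v (1 : ℝ)) ^ p := by
      simpa using abs_rpow_le_lpNorm_rpow (by linarith) (Pi.single v (1 : ℝ)) v
    have ht' : 1 ≤ ((t : ℝ) - 1) ^ ℓ := one_le_pow₀ (by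
      have : (2 : ℝ) ≤ t := by exact_mod_cast ht
      linarith)
    rw [lpNorm_mulVec_single_rpow hA (by linarith)]
    norm_num
    calc (t : ℝ) = t * 1 * 1 := by ring
      _ ≤ t * ((t : ℝ) - 1) ^ ℓ * lpNorm p (Pi.single v 1) ^ p := by gcongr
  · have hq : 2 ≤ (t - 1) * (s - 1) :=
      le_trans (by norm_num) (Nat.mul_le_mul (show 1 ≤ t - 1 by omega) (show 2 ≤ s - 1 by omega))
    exact ⟨treeVec A v ℓ (-((s : ℝ) - 1)⁻¹), treeVec_ne_zero v ℓ _,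
      ncard_support_treeVec_le hA hq hℓ _,
      fun p hp => lpNorm_mulVec_treeVec_rpow_le hA (by omega) (by omega) hac (by linarith)⟩
end

section
/- Let A ∈ ℝ^{m×n}, let σ > 0 satisfy ‖Av‖₂ ≥ σ‖v‖₂ for every v ∈ ℝ^n orthogonal to ker(A), and let x ∈ ℝ^n with ‖x‖₂ = 1. Set ε = ‖Ax‖₂/σ and assume ε < 1. Then ker(A) contains a vector y that is (|supp(x)|, ε/(1−ε))-ℓ₂-compressible; moreover one may take y to be the orthogonal projection of x onto ker(A). -/
open Finset

/-!
Let `y` be the orthogonal projection of `x` onto `ker A`. The residual `x - y` is orthogonal to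
`ker A` and `A (x - y) = A x`, so the hypothesis on `σ` gives `‖x - y‖₂ ≤ ‖A x‖₂ / σ = ε`.
Hence `‖y‖₂ ≥ 1 - ε > 0`, and `x` itself is a `|supp x|`-sparse vector within
`ε ≤ ε / (1 - ε) · ‖y‖₂` of `y`.
-/

open Matrix WithLp

lemma lpNorm_two_eq_norm_toLp {ι : Type*} [Fintype ι] (v : ι → ℝ) :
    lpNorm 2 v = ‖toLp 2 v‖ := by
  simp only [lpNorm, EuclideanSpace.norm_eq, Real.norm_eq_abs, sq_abs,
    Real.sqrt_eq_rpow, ← Real.rpow_two]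
  norm_num

lemma Submodule.exists_mem_forall_sub_dotProduct_eq_zero {ι : Type*} [Fintype ι]
    (K : Submodule ℝ (ι → ℝ)) (x : ι → ℝ) : ∃ y ∈ K, ∀ z ∈ K, (x - y) ⬝ᵥ z = 0 := by
  let KE := K.comap (WithLp.linearEquiv 2 ℝ (ι → ℝ)).toLinearMap
  refine ⟨ofLp (KE.starProjection (toLp 2 x)), KE.starProjection_apply_mem _, fun z hz => ?_⟩
  have h := KE.sub_starProjection_mem_orthogonal (toLp 2 x) (toLp 2 z) hz
  simpa [EuclideanSpace.inner_eq_star_dotProduct, dotProduct_comm] using h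

lemma norm_sub_le_div_one_sub_mul_norm {E : Type*} [SeminormedAddCommGroup E] {u v : E}
    {ε : ℝ} (hu : ‖u‖ = 1) (huv : ‖u - v‖ ≤ ε) (hε : ε < 1) :
    ‖v - u‖ ≤ ε / (1 - ε) * ‖v‖ := by
  have hv : 1 - ε ≤ ‖v‖ := by linarith [norm_sub_norm_le u v]
  calc ‖v - u‖ ≤ ε := norm_sub_rev u v ▸ huv
    _ = ε / (1 - ε) * (1 - ε) := by field_simp [(sub_pos.2 hε).ne']
    _ ≤ ε / (1 - ε) * ‖v‖ := by
        gcongr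
        exact div_nonneg ((norm_nonneg _).trans huv) (sub_pos.2 hε).le

open Matrix in
/-- **Rounding to the kernel.** If `‖Av‖₂ ≥ σ‖v‖₂ for every `v` orthogonal to `ker A`,
`‖x‖₂ = 1` and `ε = ‖Ax‖₂/σ < 1`, then `ker A` contains a
`(|supp(x)|, ε/(1-ε))`-`ℓ₂`-compressible vector `y`, which may be taken to be the
orthogonal projection of `x` onto `ker A`. -/
theorem rounding_to_kernel {m n : ℕ} (A : Matrix (Fin m) (Fin n) ℝ) (σ : ℝ) (hσ : 0 < σ)
    (hA : ∀ v : Fin n → ℝ, (∀ z : Fin n → ℝ, A.mulVec z = 0 → v ⬝ᵥ z = 0) →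
      σ * lpNorm 2 v ≤ lpNorm 2 (A.mulVec v))
    (x : Fin n → ℝ) (hx : lpNorm 2 x = 1)
    (ε : ℝ) (hεdef : ε = lpNorm 2 (A.mulVec x) / σ) (hε1 : ε < 1) :
    ∃ y : Fin n → ℝ, A.mulVec y = 0 ∧
      (∀ z : Fin n → ℝ, A.mulVec z = 0 → (x - y) ⬝ᵥ z = 0) ∧
      y ≠ 0 ∧
      Compressible 2 ((Function.support x).ncard : ℝ) (ε / (1 - ε)) y := by
  obtain ⟨y, hyK : A *ᵥ y = 0, horth⟩ :=
    (LinearMap.ker A.mulVecLin).exists_mem_forall_sub_dotProduct_eq_zero x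
  have hxy : lpNorm 2 (x - y) ≤ ε := by
    have h := hA (x - y) horth
    rw [mulVec_sub, hyK, sub_zero] at h
    exact hεdef ▸ (le_div_iff₀' hσ).2 h
  simp only [lpNorm_two_eq_norm_toLp, toLp_sub] at hx hxy
  refine ⟨y, hyK, horth, ?_, x, le_rfl, ?_⟩
  · rintro rfl
    simp only [toLp_zero, sub_zero, hx] at hxy
    linarith
  · simpa only [lpNorm_two_eq_norm_toLp, toLp_sub] using
      norm_sub_le_div_one_sub_mul_norm hx hxy hε1
end

section
/- Let n, m, s, t be positive integers with n·t = m·s, and let F be a viable set of edges between V_L = [n] and V_R = [m]. Let u ∈ V_L with deg_F(u) < t, let y ∈ V_R with deg_F(y) = 0, and let z ∈ V_R \ N_F(u). Then |{G ∈ 𝒢_{m,n,s,t} : F ∪ {{u,y}} ⊆ E(G)}| ≥ |{G ∈ 𝒢_{m,n,s,t} : F ∪ {{u,z}} ⊆ E(G)}|. -/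
open Finset

section InjectionAux

variable {n m : ℕ}

private instance {F : Finset (Fin n × Fin m)} {N : Fin n → Finset (Fin m)} :
    Decidable (edgesSubset F N) := inferInstanceAs (Decidable (∀ e ∈ F, e.2 ∈ N e.1))

/-- The set of left vertices adjacent to `y` but not `z`. -/
private def Lset (y z : Fin m) (N : Fin n → Finset (Fin m)) : Finset (Fin n) :=
  Finset.univ.filter (fun v => y ∈ N v ∧ z ∉ N v)

private lemma filter_split (p q : Fin m) (N : Fin n → Finset (Fin m)) :
    (Finset.univ.filter (fun v => p ∈ N v ∧ q ∈ N v)).card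
      + (Finset.univ.filter (fun v => p ∈ N v ∧ q ∉ N v)).card
      = rightDeg N p := by
  rw [rightDeg, ← Finset.filter_filter, ← Finset.filter_filter]
  exact Finset.card_filter_add_card_filter_not (p := fun v => q ∈ N v)

private lemma card_Lset_comm {s t : ℕ} (y z : Fin m) {N : Fin n → Finset (Fin m)}
    (hN : N ∈ GSet m n s t) : (Lset y z N).card = (Lset z y N).card := by
  have hmem := (Finset.mem_filter.mp hN).2
  have hy : rightDeg N y = s := hmem.2 y
  have hz : rightDeg N z = s := hmem.2 z
  have h1 := filter_split y z N
  have h2 := filter_split z y N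
  have he : (Finset.univ.filter (fun v => y ∈ N v ∧ z ∈ N v))
      = (Finset.univ.filter (fun v => z ∈ N v ∧ y ∈ N v)) := by
    apply Finset.filter_congr; intro v _; exact and_comm
  rw [he] at h1
  unfold Lset
  omega

/-- The switch operation: at `u`, remove `a` and add `b`; at `v`, remove `b` and add `a`. -/
private def sw (u v : Fin n) (a b : Fin m) (N : Fin n → Finset (Fin m)) :
    Fin n → Finset (Fin m) :=
  fun w => if w = u then insert b ((N u).erase a)
    else if w = v then insert a ((N v).erase b) else N w

/-- Conditions under which the switch behaves well. -/
private structure SwOk (u v : Fin n) (a b : Fin m) (N : Fin n → Finset (Fin m)) : Prop where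
  hvu : v ≠ u
  hab : a ≠ b
  hau : a ∈ N u
  hbu : b ∉ N u
  hbv : b ∈ N v
  hav : a ∉ N v

private lemma sw_u (u v : Fin n) (a b : Fin m) (N : Fin n → Finset (Fin m)) :
    sw u v a b N u = insert b ((N u).erase a) := by simp [sw]

private lemma sw_v {u v : Fin n} (hvu : v ≠ u) (a b : Fin m) (N : Fin n → Finset (Fin m)) :
    sw u v a b N v = insert a ((N v).erase b) := by simp [sw, hvu]

private lemma sw_other {u v w : Fin n} (hwu : w ≠ u) (hwv : w ≠ v) (a b : Fin m)
    (N : Fin n → Finset (Fin m)) : sw u v a b N w = N w := by simp [sw, hwu, hwv]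

private lemma sw_swOk {u v : Fin n} {a b : Fin m} {N : Fin n → Finset (Fin m)}
    (H : SwOk u v a b N) : SwOk u v b a (sw u v a b N) := by
  refine ⟨H.hvu, H.hab.symm, ?_, ?_, ?_, ?_⟩
  · rw [sw_u]; exact Finset.mem_insert_self _ _
  · rw [sw_u]; simp [H.hab, H.hbu]
  · rw [sw_v H.hvu]; exact Finset.mem_insert_self _ _
  · rw [sw_v H.hvu]; simp [H.hab.symm, H.hav]

private lemma sw_inv {u v : Fin n} {a b : Fin m} {N : Fin n → Finset (Fin m)}
    (H : SwOk u v a b N) : sw u v b a (sw u v a b N) = N := by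
  funext w
  by_cases hwu : w = u
  · subst hwu
    rw [sw_u, sw_u, Finset.erase_insert, Finset.insert_erase H.hau]
    simp [H.hbu]
  · by_cases hwv : w = v
    · subst hwv
      rw [sw_v H.hvu, sw_v H.hvu, Finset.erase_insert, Finset.insert_erase H.hbv]
      simp [H.hav]
    · rw [sw_other hwu hwv, sw_other hwu hwv]

private lemma sw_filter_b {u v : Fin n} {a b : Fin m} {N : Fin n → Finset (Fin m)}
    (H : SwOk u v a b N) :
    Finset.univ.filter (fun w => b ∈ sw u v a b N w)
      = insert u ((Finset.univ.filter (fun w => b ∈ N w)).erase v) := by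
  ext w
  by_cases hwu : w = u
  · subst hwu; simp [sw_u]
  · by_cases hwv : w = v
    · subst hwv; simp [sw_v H.hvu, hwu, H.hab.symm]
    · simp [sw_other hwu hwv, hwu, hwv]

private lemma sw_filter_a {u v : Fin n} {a b : Fin m} {N : Fin n → Finset (Fin m)}
    (H : SwOk u v a b N) :
    Finset.univ.filter (fun w => a ∈ sw u v a b N w)
      = insert v ((Finset.univ.filter (fun w => a ∈ N w)).erase u) := by
  ext w
  by_cases hwu : w = u
  · subst hwu; simp [sw_u, H.hab, H.hvu.symm]
  · by_cases hwv : w = v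
    · subst hwv; simp [sw_v H.hvu]
    · simp [sw_other hwu hwv, hwu, hwv]

private lemma sw_filter_other {u v : Fin n} {a b r : Fin m} {N : Fin n → Finset (Fin m)}
    (hra : r ≠ a) (hrb : r ≠ b) (hvu : v ≠ u) :
    Finset.univ.filter (fun w => r ∈ sw u v a b N w)
      = Finset.univ.filter (fun w => r ∈ N w) := by
  ext w
  by_cases hwu : w = u
  · subst hwu; simp [sw_u, hra, hrb]
  · by_cases hwv : w = v
    · subst hwv; simp [sw_v hvu, hra, hrb]
    · simp [sw_other hwu hwv]

private lemma sw_rightDeg {u v : Fin n} {a b : Fin m} {N : Fin n → Finset (Fin m)}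
    (H : SwOk u v a b N) (r : Fin m) : rightDeg (sw u v a b N) r = rightDeg N r := by
  by_cases hrb : r = b
  · subst hrb
    rw [rightDeg, rightDeg, sw_filter_b H]
    have hu : u ∉ (Finset.univ.filter (fun w => r ∈ N w)).erase v := by
      simp [H.hbu]
    have hv : v ∈ Finset.univ.filter (fun w => r ∈ N w) := by simp [H.hbv]
    rw [Finset.card_insert_of_notMem hu, Finset.card_erase_of_mem hv]
    have : 0 < (Finset.univ.filter (fun w => r ∈ N w)).card :=
      Finset.card_pos.mpr ⟨v, hv⟩
    omega
  · by_cases hra : r = a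
    · subst hra
      rw [rightDeg, rightDeg, sw_filter_a H]
      have hv : v ∉ (Finset.univ.filter (fun w => r ∈ N w)).erase u := by
        simp [H.hav]
      have hu : u ∈ Finset.univ.filter (fun w => r ∈ N w) := by simp [H.hau]
      rw [Finset.card_insert_of_notMem hv, Finset.card_erase_of_mem hu]
      have : 0 < (Finset.univ.filter (fun w => r ∈ N w)).card :=
        Finset.card_pos.mpr ⟨u, hu⟩
      omega
    · rw [rightDeg, rightDeg, sw_filter_other hra hrb H.hvu]

private lemma sw_mem_GSet {s t : ℕ} {u v : Fin n} {a b : Fin m} {N : Fin n → Finset (Fin m)}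
    (H : SwOk u v a b N) (hN : N ∈ GSet m n s t) : sw u v a b N ∈ GSet m n s t := by
  have hmem := (Finset.mem_filter.mp hN).2
  refine Finset.mem_filter.mpr ⟨Finset.mem_univ _, ?_, fun r => by
    rw [sw_rightDeg H r]; exact hmem.2 r⟩
  intro w
  by_cases hwu : w = u
  · subst hwu
    rw [sw_u]
    have hb : b ∉ (N w).erase a := fun hc => H.hbu (Finset.mem_of_mem_erase hc)
    rw [Finset.card_insert_of_notMem hb, Finset.card_erase_of_mem H.hau]
    have : 0 < (N w).card := Finset.card_pos.mpr ⟨a, H.hau⟩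
    have := hmem.1 w
    omega
  · by_cases hwv : w = v
    · subst hwv
      rw [sw_v H.hvu]
      have ha : a ∉ (N w).erase b := fun hc => H.hav (Finset.mem_of_mem_erase hc)
      rw [Finset.card_insert_of_notMem ha, Finset.card_erase_of_mem H.hbv]
      have : 0 < (N w).card := Finset.card_pos.mpr ⟨b, H.hbv⟩
      have := hmem.1 w
      omega
    · rw [sw_other hwu hwv]; exact hmem.1 w

private lemma sw_Lset_ba {u v : Fin n} {a b : Fin m} {N : Fin n → Finset (Fin m)}
    (H : SwOk u v a b N) :
    Lset b a (sw u v a b N) = insert u ((Lset b a N).erase v) := by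
  ext w
  by_cases hwu : w = u
  · subst hwu; simp [Lset, sw_u, H.hab]
  · by_cases hwv : w = v
    · subst hwv; simp [Lset, sw_v H.hvu, hwu, H.hab.symm]
    · simp [Lset, sw_other hwu hwv, hwu, hwv]

private lemma sw_Lset_ab {u v : Fin n} {a b : Fin m} {N : Fin n → Finset (Fin m)}
    (H : SwOk u v a b N) :
    Lset a b (sw u v a b N) = insert v ((Lset a b N).erase u) := by
  ext w
  by_cases hwu : w = u
  · subst hwu; simp [Lset, sw_u, H.hab, H.hvu.symm]
  · by_cases hwv : w = v
    · subst hwv; simp [Lset, sw_v H.hvu, H.hab.symm]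
    · simp [Lset, sw_other hwu hwv, hwu, hwv]

end InjectionAux

section InjectionMain

variable {n m : ℕ}

private lemma card_fiber_le {s t : ℕ} (F : Finset (Fin n × Fin m)) (u : Fin n) (y z : Fin m)
    (hyF : ∀ e ∈ F, e.2 ≠ y) (hzF : (u, z) ∉ F) (hyz : y ≠ z) (d : ℕ) :
    (((GSet m n s t).filter
        (fun N => edgesSubset (insert (u, z) F) N ∧ y ∉ N u)).filter
        (fun N => (Lset y z N).card = d)).card ≤
    (((GSet m n s t).filter
        (fun N => edgesSubset (insert (u, y) F) N ∧ z ∉ N u)).filter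
        (fun N => (Lset y z N).card = d)).card := by
  classical
  rcases Nat.eq_zero_or_pos d with hd0 | hd1
  · subst hd0
    refine le_trans (Nat.le_of_eq ?_) (Nat.zero_le _)
    rw [Finset.card_eq_zero, Finset.filter_eq_empty_iff]
    rintro N hN hLd
    rw [Finset.mem_filter] at hN
    obtain ⟨hNG, hE, hyN⟩ := hN
    have hzu : z ∈ N u := hE (u, z) (Finset.mem_insert_self _ _)
    have huL : u ∈ Lset z y N := by simp [Lset, hzu, hyN]
    have hpos : 0 < (Lset y z N).card := by
      rw [card_Lset_comm y z hNG]; exact Finset.card_pos.mpr ⟨u, huL⟩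
    omega
  -- positive case: double counting via the switch injection on sigma sets
  have hok : ∀ N, N ∈ (GSet m n s t).filter
      (fun N => edgesSubset (insert (u, z) F) N ∧ y ∉ N u) →
      ∀ v ∈ Lset y z N, SwOk u v z y N := by
    intro N hN v hv
    rw [Finset.mem_filter] at hN
    obtain ⟨hNG, hE, hyN⟩ := hN
    simp only [Lset, Finset.mem_filter, Finset.mem_univ, true_and] at hv
    obtain ⟨hyv, hzv⟩ := hv
    have hzu : z ∈ N u := hE (u, z) (Finset.mem_insert_self _ _)
    exact ⟨fun hvu => hyN (hvu ▸ hyv), hyz.symm, hzu, hyN, hyv, hzv⟩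
  have hmaps : ∀ N, N ∈ ((GSet m n s t).filter
        (fun N => edgesSubset (insert (u, z) F) N ∧ y ∉ N u)).filter
        (fun N => (Lset y z N).card = d) →
      ∀ v ∈ Lset y z N,
        (sw u v z y N ∈ ((GSet m n s t).filter
          (fun N => edgesSubset (insert (u, y) F) N ∧ z ∉ N u)).filter
          (fun N => (Lset y z N).card = d)) ∧ v ∈ Lset z y (sw u v z y N) := by
    intro N hN v hv
    rw [Finset.mem_filter] at hN
    obtain ⟨hN1, hLd⟩ := hN
    have H := hok N hN1 v hv
    rw [Finset.mem_filter] at hN1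
    obtain ⟨hNG, hE, hyN⟩ := hN1
    have hvL : v ∈ Lset y z N := hv
    simp only [Lset, Finset.mem_filter, Finset.mem_univ, true_and] at hv
    obtain ⟨hyv, hzv⟩ := hv
    constructor
    · rw [Finset.mem_filter, Finset.mem_filter]
      refine ⟨⟨sw_mem_GSet H hNG, ?_, ?_⟩, ?_⟩
      · -- edgesSubset (insert (u, y) F) (sw u v z y N)
        intro e he
        rcases Finset.mem_insert.mp he with he | he
        · subst he
          show y ∈ sw u v z y N u
          rw [sw_u]; exact Finset.mem_insert_self _ _
        · have h2 : e.2 ∈ N e.1 := hE e (Finset.mem_insert_of_mem he)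
          have hey : e.2 ≠ y := hyF e he
          by_cases h1 : e.1 = u
          · have hez : e.2 ≠ z := by
              intro hc
              apply hzF
              have : e = (u, z) := Prod.ext h1 hc
              rwa [this] at he
            rw [h1] at h2 ⊢
            rw [sw_u]
            exact Finset.mem_insert_of_mem (Finset.mem_erase.mpr ⟨hez, h2⟩)
          · by_cases h1v : e.1 = v
            · rw [h1v] at h2 ⊢
              rw [sw_v H.hvu]
              exact Finset.mem_insert_of_mem (Finset.mem_erase.mpr ⟨hey, h2⟩)
            · rw [sw_other h1 h1v]; exact h2
      · rw [sw_u]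
        simp [Finset.mem_insert, Finset.mem_erase, Ne.symm hyz]
      · rw [sw_Lset_ba H]
        have hunotL : u ∉ (Lset y z N).erase v := by
          intro hc
          have := Finset.mem_of_mem_erase hc
          simp only [Lset, Finset.mem_filter] at this
          exact hyN this.2.1
        rw [Finset.card_insert_of_notMem hunotL, Finset.card_erase_of_mem hvL]
        have hpos : 0 < (Lset y z N).card := Finset.card_pos.mpr ⟨v, hvL⟩
        omega
    · rw [sw_Lset_ab H]
      exact Finset.mem_insert_self _ _
  have hcard : ((((GSet m n s t).filter
        (fun N => edgesSubset (insert (u, z) F) N ∧ y ∉ N u)).filter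
        (fun N => (Lset y z N).card = d)).sigma (fun N => Lset y z N)).card ≤
      ((((GSet m n s t).filter
        (fun N => edgesSubset (insert (u, y) F) N ∧ z ∉ N u)).filter
        (fun N => (Lset y z N).card = d)).sigma (fun M => Lset z y M)).card := by
    apply Finset.card_le_card_of_injOn (fun p => ⟨sw u p.2 z y p.1, p.2⟩)
    · rintro ⟨N, v⟩ hp
      rw [Finset.mem_coe, Finset.mem_sigma] at hp ⊢
      exact ⟨(hmaps N hp.1 v hp.2).1, (hmaps N hp.1 v hp.2).2⟩
    · rintro ⟨N1, v1⟩ hp1 ⟨N2, v2⟩ hp2 heq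
      simp only [Finset.coe_sigma, Set.mem_sigma_iff, Finset.mem_coe] at hp1 hp2
      obtain ⟨hM, hv⟩ := Sigma.mk.inj_iff.mp heq
      have hvv : v1 = v2 := eq_of_heq hv
      subst hvv
      have H1 := hok N1 (Finset.mem_filter.mp hp1.1).1 v1 hp1.2
      have H2 := hok N2 (Finset.mem_filter.mp hp2.1).1 v1 hp2.2
      have hN12 : N1 = N2 := by
        calc N1 = sw u v1 y z (sw u v1 z y N1) := (sw_inv H1).symm
          _ = sw u v1 y z (sw u v1 z y N2) := by rw [hM]
          _ = N2 := sw_inv H2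
      subst hN12
      rfl
  rw [Finset.card_sigma, Finset.card_sigma] at hcard
  have hsumA : ∑ N ∈ ((GSet m n s t).filter
        (fun N => edgesSubset (insert (u, z) F) N ∧ y ∉ N u)).filter
        (fun N => (Lset y z N).card = d), (Lset y z N).card
      = d * (((GSet m n s t).filter
        (fun N => edgesSubset (insert (u, z) F) N ∧ y ∉ N u)).filter
        (fun N => (Lset y z N).card = d)).card := by
    have hc : ∀ N ∈ ((GSet m n s t).filter
        (fun N => edgesSubset (insert (u, z) F) N ∧ y ∉ N u)).filter
        (fun N => (Lset y z N).card = d), (Lset y z N).card = d :=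
      fun N hN => (Finset.mem_filter.mp hN).2
    rw [Finset.sum_congr rfl hc, Finset.sum_const, smul_eq_mul, mul_comm]
  have hsumB : ∑ M ∈ ((GSet m n s t).filter
        (fun N => edgesSubset (insert (u, y) F) N ∧ z ∉ N u)).filter
        (fun N => (Lset y z N).card = d), (Lset z y M).card
      = d * (((GSet m n s t).filter
        (fun N => edgesSubset (insert (u, y) F) N ∧ z ∉ N u)).filter
        (fun N => (Lset y z N).card = d)).card := by
    have hc : ∀ M ∈ ((GSet m n s t).filter
        (fun N => edgesSubset (insert (u, y) F) N ∧ z ∉ N u)).filter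
        (fun N => (Lset y z N).card = d), (Lset z y M).card = d := by
      intro M hM
      rw [← card_Lset_comm y z (Finset.mem_filter.mp (Finset.mem_filter.mp hM).1).1]
      exact (Finset.mem_filter.mp hM).2
    rw [Finset.sum_congr rfl hc, Finset.sum_const, smul_eq_mul, mul_comm]
  rw [hsumA, hsumB] at hcard
  exact Nat.le_of_mul_le_mul_left hcard hd1

private lemma card_A2_le_B2 {s t : ℕ} (F : Finset (Fin n × Fin m)) (u : Fin n) (y z : Fin m)
    (hyF : ∀ e ∈ F, e.2 ≠ y) (hzF : (u, z) ∉ F) (hyz : y ≠ z) :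
    ((GSet m n s t).filter (fun N => edgesSubset (insert (u, z) F) N ∧ y ∉ N u)).card ≤
    ((GSet m n s t).filter (fun N => edgesSubset (insert (u, y) F) N ∧ z ∉ N u)).card := by
  classical
  have hrange : ∀ N : Fin n → Finset (Fin m), (Lset y z N).card ∈ Finset.range (n + 1) := by
    intro N
    rw [Finset.mem_range]
    have h := Finset.card_le_univ (Lset y z N)
    have h2 : Fintype.card (Fin n) = n := Fintype.card_fin n
    omega
  rw [Finset.card_eq_sum_card_fiberwise (f := fun N => (Lset y z N).card)
      (t := Finset.range (n + 1)) (fun N _ => hrange N),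
    Finset.card_eq_sum_card_fiberwise (f := fun N => (Lset y z N).card)
      (t := Finset.range (n + 1)) (fun N _ => hrange N)]
  exact Finset.sum_le_sum (fun d _ => card_fiber_le F u y z hyF hzF hyz d)

end InjectionMain

/-- **Negative-association-type counting lemma.** For a viable edge set `F`, a left vertex
`u` with `deg_F(u) < t`, a right vertex `y` with `deg_F(y) = 0`, and `z ∈ V_R ∖ N_F(u)`,
there are at least as many graphs in `𝒢_{m,n,s,t}` containing `F ∪ {{u,y}}` as containing
`F ∪ {{u,z}}`. -/
theorem injection_counting (n m s t : ℕ) (hn : 0 < n) (hm : 0 < m) (hs : 0 < s) (ht : 0 < t)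
    (hbal : n * t = m * s) (F : Finset (Fin n × Fin m))
    (hviable : ∃ N ∈ GSet m n s t, edgesSubset F N)
    (u : Fin n) (hu : (F.filter (fun e => e.1 = u)).card < t)
    (y : Fin m) (hy : (F.filter (fun e => e.2 = y)).card = 0)
    (z : Fin m) (hz : (u, z) ∉ F) :
    Set.ncard {N | N ∈ GSet m n s t ∧ edgesSubset (insert (u, z) F) N} ≤
      Set.ncard {N | N ∈ GSet m n s t ∧ edgesSubset (insert (u, y) F) N} := by
  classical
  have hset : ∀ w : Fin m,
      {N | N ∈ GSet m n s t ∧ edgesSubset (insert (u, w) F) N} =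
        ↑((GSet m n s t).filter (fun N => edgesSubset (insert (u, w) F) N)) := by
    intro w; ext N; simp
  rw [hset z, hset y, Set.ncard_coe_finset, Set.ncard_coe_finset]
  by_cases hyz : y = z
  · subst hyz; exact le_rfl
  have hyF : ∀ e ∈ F, e.2 ≠ y := by
    intro e he heq
    have hmem : e ∈ F.filter (fun e => e.2 = y) := Finset.mem_filter.mpr ⟨he, heq⟩
    rw [Finset.card_eq_zero] at hy
    rw [hy] at hmem
    exact absurd hmem (Finset.notMem_empty e)
  have hsplitA := Finset.card_filter_add_card_filter_not
    (s := (GSet m n s t).filter (fun N => edgesSubset (insert (u, z) F) N))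
    (p := fun N => y ∈ N u)
  have hsplitB := Finset.card_filter_add_card_filter_not
    (s := (GSet m n s t).filter (fun N => edgesSubset (insert (u, y) F) N))
    (p := fun N => z ∈ N u)
  have hAB : ((GSet m n s t).filter
        (fun N => edgesSubset (insert (u, z) F) N)).filter (fun N => y ∈ N u)
      = ((GSet m n s t).filter
        (fun N => edgesSubset (insert (u, y) F) N)).filter (fun N => z ∈ N u) := by
    rw [Finset.filter_filter, Finset.filter_filter]
    apply Finset.filter_congr
    intro N _
    simp only [edgesSubset, Finset.forall_mem_insert]
    constructor
    · rintro ⟨⟨hz', hF⟩, hy'⟩; exact ⟨⟨hy', hF⟩, hz'⟩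
    · rintro ⟨⟨hy', hF⟩, hz'⟩; exact ⟨⟨hz', hF⟩, hy'⟩
  have h2 : (((GSet m n s t).filter
        (fun N => edgesSubset (insert (u, z) F) N)).filter (fun N => ¬ y ∈ N u)).card
      ≤ (((GSet m n s t).filter
        (fun N => edgesSubset (insert (u, y) F) N)).filter (fun N => ¬ z ∈ N u)).card := by
    rw [Finset.filter_filter, Finset.filter_filter]
    exact card_A2_le_B2 F u y z hyF hz hyz
  have hABc : (((GSet m n s t).filter
        (fun N => edgesSubset (insert (u, z) F) N)).filter (fun N => y ∈ N u)).card
      = (((GSet m n s t).filter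
        (fun N => edgesSubset (insert (u, y) F) N)).filter (fun N => z ∈ N u)).card := by
    rw [hAB]
  rw [← hsplitA, ← hsplitB]
  exact Nat.add_le_add (le_of_eq hABc) h2
end

section
/- Let G = (V_L, V_R, E) be a bipartite t-left-regular (γ,μ)-unique expander with |V_L| = n, and let S ⊆ V_L with |S| ≤ γn. Then there exists a set of edges M ⊆ E(S, N(S)) such that (1) every r ∈ N(S) is incident to exactly one edge of M, and (2) every v ∈ S is incident to at least t(1−μ) edges of M. -/
open Finset

/-! Unique expansion is inherited by every subset `T ⊆ S`. Averaging the unique neighbours of a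
nonempty `T` over its vertices gives some `v ∈ T` with at least `t(1-μ)` of them; none of these
is a neighbour of `T \ {v}`, so they can all be matched to `v`, and induction matches the rest of
`N(T)` inside `T \ {v}`. -/

section

variable {n m : ℕ} (N : Fin n → Finset (Fin m))

def IsManyToOneMatching (c : ℝ) (S : Finset (Fin n)) (M : Finset (Fin n × Fin m)) : Prop :=
  (∀ e ∈ M, e.1 ∈ S ∧ e.2 ∈ N e.1) ∧
  (∀ r ∈ nbrs N S, (M.filter (fun e => e.2 = r)).card = 1) ∧
  (∀ v ∈ S, c ≤ ((M.filter (fun e => e.1 = v)).card : ℝ))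

theorem nbrs_insert (v : Fin n) (T : Finset (Fin n)) :
    nbrs N (insert v T) = N v ∪ nbrs N T :=
  biUnion_insert

theorem sum_card_filter_uniqueNbrs (T : Finset (Fin n)) :
    ∑ v ∈ T, ((uniqueNbrs N T).filter (· ∈ N v)).card = (uniqueNbrs N T).card := by
  have h := sum_card_bipartiteAbove_eq_sum_card_bipartiteBelow
    (s := T) (t := uniqueNbrs N T) (r := fun v r => r ∈ N v)
  simp only [bipartiteAbove, bipartiteBelow] at h
  rw [h, card_eq_sum_ones]
  exact sum_congr rfl fun r hr => (mem_filter.mp hr).2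

theorem exists_le_card_filter_uniqueNbrs {c : ℝ} {T : Finset (Fin n)} (hT : T.Nonempty)
    (hU : c * T.card ≤ (uniqueNbrs N T).card) :
    ∃ v ∈ T, c ≤ ((uniqueNbrs N T).filter (· ∈ N v)).card := by
  refine exists_le_of_sum_le hT ?_
  rw [sum_const, nsmul_eq_mul, ← Nat.cast_sum, sum_card_filter_uniqueNbrs, mul_comm]
  exact hU

theorem filter_mem_uniqueNbrs_subset_sdiff {T : Finset (Fin n)} {v : Fin n} (hv : v ∈ T) :
    (uniqueNbrs N T).filter (· ∈ N v) ⊆ N v \ nbrs N (T.erase v) := by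
  intro r hr
  obtain ⟨hrU, hrv⟩ := mem_filter.mp hr
  refine mem_sdiff.mpr ⟨hrv, fun h => ?_⟩
  obtain ⟨u, hu, hru⟩ := mem_biUnion.mp h
  have hunique : (T.filter (fun w => r ∈ N w)).card ≤ 1 := (mem_filter.mp hrU).2.le
  exact (mem_erase.mp hu).1 <| card_le_one.mp hunique u
    (mem_filter.mpr ⟨mem_of_mem_erase hu, hru⟩) v (mem_filter.mpr ⟨hv, hrv⟩)

theorem IsManyToOneMatching.insert {c : ℝ} {T : Finset (Fin n)} {v : Fin n}
    {M : Finset (Fin n × Fin m)} (hM : IsManyToOneMatching N c T M) (hv : v ∉ T)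
    (hc : c ≤ (N v \ nbrs N T).card) :
    IsManyToOneMatching N c (insert v T) (M ∪ (N v \ nbrs N T).image (Prod.mk v)) := by
  obtain ⟨hE, hR, hL⟩ := hM
  set D := N v \ nbrs N T
  refine ⟨?_, ?_, ?_⟩
  · intro e he
    rcases mem_union.mp he with he | he
    · exact ⟨mem_insert_of_mem (hE e he).1, (hE e he).2⟩
    · obtain ⟨r, hr, rfl⟩ := mem_image.mp he
      exact ⟨mem_insert_self v T, (mem_sdiff.mp hr).1⟩
  · intro r hr
    rw [filter_union, filter_image]
    by_cases hrT : r ∈ nbrs N T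
    · have hrD : D.filter (· = r) = ∅ :=
        filter_eq_empty_iff.mpr fun a ha har => (mem_sdiff.mp (har ▸ ha)).2 hrT
      rw [hrD, image_empty, union_empty, hR r hrT]
    · have hMr : M.filter (·.2 = r) = ∅ :=
        filter_eq_empty_iff.mpr fun e he her => hrT (her ▸ mem_biUnion.mpr ⟨e.1, hE e he⟩)
      have hrD : r ∈ D := mem_sdiff.mpr ⟨by simpa [nbrs_insert, hrT] using hr, hrT⟩
      rw [hMr, empty_union, filter_eq' D r, if_pos hrD, image_singleton, card_singleton]
  · intro u hu
    rcases mem_insert.mp hu with rfl | hu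
    · calc c ≤ D.card := hc
        _ = (D.image (Prod.mk u)).card := by
          rw [card_image_of_injective _ (Prod.mk_right_injective u)]
        _ ≤ _ := by
          gcongr
          intro e he
          obtain ⟨r, -, rfl⟩ := mem_image.mp he
          exact mem_filter.mpr ⟨mem_union_right _ he, rfl⟩
    · exact (hL u hu).trans (by gcongr; exact subset_union_left)

theorem exists_isManyToOneMatching {c : ℝ} (T : Finset (Fin n))
    (hT : ∀ T' ⊆ T, c * T'.card ≤ (uniqueNbrs N T').card) :
    ∃ M, IsManyToOneMatching N c T M := by
  induction T using Finset.strongInduction with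
  | H T ih =>
  rcases T.eq_empty_or_nonempty with rfl | hne
  · exact ⟨∅, by simp [IsManyToOneMatching, nbrs]⟩
  obtain ⟨v, hvT, hv⟩ := exists_le_card_filter_uniqueNbrs N hne (hT T Subset.rfl)
  obtain ⟨M, hM⟩ := ih (T.erase v) (erase_ssubset hvT) fun T' hT' =>
    hT T' (hT'.trans (erase_subset v T))
  rw [← insert_erase hvT]
  exact ⟨_, hM.insert N (notMem_erase v T)
    (hv.trans (by gcongr; exact filter_mem_uniqueNbrs_subset_sdiff N hvT))⟩

end

theorem matching_exists_general {n m : ℕ} (t : ℕ) (γ μ : ℝ) (N : Fin n → Finset (Fin m))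
    (hexp : UniqueExpander N t γ μ)
    (S : Finset (Fin n)) (hS : (S.card : ℝ) ≤ γ * n) :
    ∃ M : Finset (Fin n × Fin m),
      (∀ e ∈ M, e.1 ∈ S ∧ e.2 ∈ N e.1) ∧
      (∀ r ∈ nbrs N S, (M.filter (fun e => e.2 = r)).card = 1) ∧
      (∀ v ∈ S, (t : ℝ) * (1 - μ) ≤ ((M.filter (fun e => e.1 = v)).card : ℝ)) :=
  exists_isManyToOneMatching N S fun T hT =>
    hexp T ((Nat.cast_le.mpr (card_le_card hT)).trans hS)

/-- **Existence of a many-to-one matching.** If `G` is a `t`-left-regular `(γ, μ)`-unique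
expander and `|S| ≤ γn`, then there is a set of edges `M ⊆ E(S, N(S))` such that every
`r ∈ N(S)` touches exactly one edge of `M` and every `v ∈ S` touches at least `t(1-μ)`
edges of `M`. -/
theorem matching_exists {n m : ℕ} (t : ℕ) (γ μ : ℝ) (N : Fin n → Finset (Fin m))
    (hreg : LeftRegular N t) (hexp : UniqueExpander N t γ μ)
    (S : Finset (Fin n)) (hS : (S.card : ℝ) ≤ γ * n) :
    ∃ M : Finset (Fin n × Fin m),
      (∀ e ∈ M, e.1 ∈ S ∧ e.2 ∈ N e.1) ∧
      (∀ r ∈ nbrs N S, (M.filter (fun e => e.2 = r)).card = 1) ∧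
      (∀ v ∈ S, (t : ℝ) * (1 - μ) ≤ ((M.filter (fun e => e.1 = v)).card : ℝ)) :=
  matching_exists_general t γ μ N hexp S hS
end

section
/- Let A ∈ {0,1,−1}^{m×n} be such that the bipartite graph G_A is t-left-regular and a (γ,μ)-unique expander, and let s_max be the maximum degree of a right vertex of G_A. Then for any p ≥ 1, any δ₁ > 0, and any γn-sparse x ∈ ℝ^n, ‖Ax‖_p^p ≥ ( t(1−μ)/(1+δ₁)^{p−1} − (μ t / δ₁^{p−1})·(s_max − 1)^{p−1} ) · ‖x‖_p^p. -/
open Finset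

/-!
Let `S = supp x` and `a_v = |x_v|^p`. Charge every row `r` meeting `S` to its heaviest neighbor
`g r ∈ S`. Convexity of `y ↦ y^p` and the power-mean inequality give, row by row,
`|(Ax)_r|^p ≥ a_{g r} / (1+δ₁)^(p-1) - (s_max-1)^(p-1) / δ₁^(p-1) · ∑_{v ≠ g r} a_v`.
Summing over rows, a vertex `v` of `S` is the heaviest neighbor of `T_v` of its `t` rows and a
lighter neighbor in the remaining `t - T_v`. Every neighbor of a superlevel set `{a > τ}` is charged
to a vertex of that set, so expansion gives `∑_{a_v > τ} T_v ≥ t(1-μ) |{a > τ}|` for every `τ`, and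
Abel summation over the levels turns this into `∑ T_v a_v ≥ t(1-μ) ∑ a_v`.
-/
lemma lpNorm_rpow_self {ι : Type*} [Fintype ι] {p : ℝ} (hp : p ≠ 0) (y : ι → ℝ) :
    lpNorm p y ^ p = ∑ i, |y i| ^ p := by
  rw [lpNorm, ← Real.rpow_mul (sum_nonneg fun i _ => by positivity), one_div_mul_cancel hp,
    Real.rpow_one]

lemma add_rpow_le_one_add_rpow_mul {p δ u v : ℝ} (hp : 1 ≤ p) (hδ : 0 < δ) (hu : 0 ≤ u)
    (hv : 0 ≤ v) : (u + v) ^ p ≤ (1 + δ) ^ (p - 1) * (u ^ p + v ^ p / δ ^ (p - 1)) := by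
  have h1δ : 0 < 1 + δ := by linarith
  -- `u + v` is the convex combination of `(1 + δ) u` and `(1 + δ) v / δ`
  -- with weights `1 / (1 + δ)` and `δ / (1 + δ)`
  have hconv := (convexOn_rpow hp).2 (Set.mem_Ici.mpr (by positivity : 0 ≤ (1 + δ) * u))
    (Set.mem_Ici.mpr (by positivity : 0 ≤ (1 + δ) / δ * v)) (by positivity : 0 ≤ 1 / (1 + δ))
    (by positivity : 0 ≤ δ / (1 + δ)) (by field_simp)
  have hcomb : 1 / (1 + δ) * ((1 + δ) * u) + δ / (1 + δ) * ((1 + δ) / δ * v) = u + v := by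
    field_simp
  simp only [smul_eq_mul, hcomb] at hconv
  refine hconv.trans_eq ?_
  rw [Real.mul_rpow h1δ.le hu, Real.mul_rpow (by positivity) hv, Real.div_rpow h1δ.le hδ.le,
    Real.rpow_sub h1δ, Real.rpow_sub hδ, Real.rpow_one, Real.rpow_one]
  field_simp

lemma rpow_abs_div_sub_le_rpow_abs_add {p δ : ℝ} (hp : 1 ≤ p) (hδ : 0 < δ) (a b : ℝ) :
    |a| ^ p / (1 + δ) ^ (p - 1) - |b| ^ p / δ ^ (p - 1) ≤ |a + b| ^ p := by
  have hpow : 0 < (1 + δ) ^ (p - 1) := by positivity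
  have htri : |a| ≤ |a + b| + |b| := by simpa using abs_sub (a + b) b
  have := (Real.rpow_le_rpow (abs_nonneg a) htri (by linarith)).trans
    (add_rpow_le_one_add_rpow_mul hp hδ (abs_nonneg (a + b)) (abs_nonneg b))
  rw [sub_le_iff_le_add, div_le_iff₀ hpow]
  linarith

lemma le_rpow_abs_add_sum {ι : Type*} {p δ : ℝ} (hp : 1 ≤ p) (hδ : 0 < δ) (w : ℝ)
    (D : Finset ι) (z : ι → ℝ) :
    |w| ^ p / (1 + δ) ^ (p - 1) - (#D : ℝ) ^ (p - 1) / δ ^ (p - 1) * ∑ i ∈ D, |z i| ^ p ≤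
      |w + ∑ i ∈ D, z i| ^ p := by
  have hsum : |∑ i ∈ D, z i| ^ p ≤ (#D : ℝ) ^ (p - 1) * ∑ i ∈ D, |z i| ^ p :=
    (Real.rpow_le_rpow (abs_nonneg _) (abs_sum_le_sum_abs _ _) (by linarith)).trans
      (Real.rpow_sum_le_const_mul_sum_rpow D z hp)
  refine le_trans ?_ (rpow_abs_div_sub_le_rpow_abs_add hp hδ w _)
  rw [div_mul_eq_mul_div]
  gcongr

lemma sum_mul_nonneg_of_sum_filter_lt_nonneg {ι : Type*} (S : Finset ι) (a w : ι → ℝ)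
    (ha : ∀ v ∈ S, 0 ≤ a v) (hw : ∀ τ, 0 ≤ ∑ v ∈ S with τ < a v, w v) :
    0 ≤ ∑ v ∈ S, w v * a v := by
  induction S using Finset.strongInduction generalizing a with
  | H S ih =>
  rcases S.eq_empty_or_nonempty with rfl | hS
  · simp
  obtain ⟨v₀, hv₀, hmin⟩ := S.exists_min_image a hS
  set α := a v₀
  set S' := {v ∈ S | α < a v}
  have hshift : 0 ≤ ∑ v ∈ S', w v * (a v - α) := by
    refine ih S' (filter_ssubset.mpr ⟨v₀, hv₀, lt_irrefl _⟩) (a · - α)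
      (fun v hv => sub_nonneg.mpr (mem_filter.mp hv).2.le) fun τ => ?_
    convert hw (max α (τ + α)) using 2
    ext v
    simp only [S', mem_filter, max_lt_iff, and_assoc]
    constructor <;> rintro ⟨h1, h2, h3⟩ <;> exact ⟨h1, h2, by linarith⟩
  have hall : 0 ≤ ∑ v ∈ S, w v := by
    simpa [filter_true_of_mem fun v hv => (sub_one_lt α).trans_le (hmin v hv)] using hw (α - 1)
  have hsplit : ∑ v ∈ S, w v * a v = α * ∑ v ∈ S, w v + ∑ v ∈ S', w v * (a v - α) := by
    rw [sum_filter_of_ne fun v hv hne => lt_of_le_of_ne (hmin v hv) ?_, mul_sum,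
      ← sum_add_distrib]
    · exact sum_congr rfl fun v _ => by ring
    · rintro h; simp [← h] at hne
  rw [hsplit]
  exact add_nonneg (mul_nonneg (ha v₀ hv₀) hall) hshift

section Graph

variable {m n : ℕ} {N : Fin n → Finset (Fin m)} {t : ℕ} {γ μ : ℝ}

lemma UniqueExpander.vertexExpander (h : UniqueExpander N t γ μ) : VertexExpander N t γ μ :=
  fun S hS => (h S hS).trans (by exact_mod_cast card_le_card (filter_subset _ _))

lemma LeftRegular.one_le_sup_rightDeg (h : LeftRegular N t) (ht : 0 < t) (v : Fin n) :
    1 ≤ univ.sup (rightDeg N) := by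
  obtain ⟨r, hr⟩ := card_pos.mp ((h v).symm ▸ ht : 0 < #(N v))
  exact (card_pos.mpr ⟨v, mem_filter.mpr ⟨mem_univ v, hr⟩⟩).trans_le
    (le_sup (f := rightDeg N) (mem_univ r))

def IsHeaviestNbrChoice (N : Fin n → Finset (Fin m)) (S : Finset (Fin n)) (a : Fin n → ℝ)
    (g : Fin m → Fin n) : Prop :=
  ∀ r, ∀ v ∈ S, r ∈ N v → g r ∈ S ∧ r ∈ N (g r) ∧ a v ≤ a (g r)

lemma exists_isHeaviestNbrChoice (N : Fin n → Finset (Fin m)) {S : Finset (Fin n)}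
    (hS : S.Nonempty) (a : Fin n → ℝ) : ∃ g, IsHeaviestNbrChoice N S a g := by
  have : ∀ r, ∃ u, ∀ v ∈ S, r ∈ N v → u ∈ S ∧ r ∈ N u ∧ a v ≤ a u := by
    intro r
    rcases {v ∈ S | r ∈ N v}.eq_empty_or_nonempty with h | h
    · exact ⟨hS.choose, fun v hv hr => absurd (h ▸ mem_filter.mpr ⟨hv, hr⟩) (notMem_empty v)⟩
    · obtain ⟨u, hu, hmax⟩ := exists_max_image _ a h
      rw [mem_filter] at hu
      exact ⟨u, fun v hv hr => ⟨hu.1, hu.2, hmax v (mem_filter.mpr ⟨hv, hr⟩)⟩⟩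
  choose g hg using this
  exact ⟨g, hg⟩

variable {S : Finset (Fin n)} {a : Fin n → ℝ} {g : Fin m → Fin n}

lemma VertexExpander.mul_card_filter_lt_le_sum_card (hexp : VertexExpander N t γ μ)
    (hS : (#S : ℝ) ≤ γ * n) (hg : IsHeaviestNbrChoice N S a g) (τ : ℝ) :
    t * (1 - μ) * #{v ∈ S | τ < a v} ≤ ∑ v ∈ S with τ < a v, (#{r ∈ N v | g r = v} : ℝ) := by
  set Sτ := {v ∈ S | τ < a v}
  -- every neighbor of `Sτ` is charged to its heaviest neighbor, which again lies in `Sτ`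
  have hsub : nbrs N Sτ ⊆ Sτ.biUnion fun v => {r ∈ N v | g r = v} := by
    intro r hr
    obtain ⟨v, hv, hrv⟩ := mem_biUnion.mp hr
    rw [mem_filter] at hv
    obtain ⟨hgS, hgN, hle⟩ := hg r v hv.1 hrv
    exact mem_biUnion.mpr ⟨g r, mem_filter.mpr ⟨hgS, hv.2.trans_le hle⟩, mem_filter.mpr ⟨hgN, rfl⟩⟩
  calc t * (1 - μ) * #Sτ ≤ #(nbrs N Sτ) :=
        hexp Sτ ((Nat.cast_le.mpr (card_le_card (filter_subset _ _))).trans hS)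
    _ ≤ ∑ v ∈ Sτ, (#{r ∈ N v | g r = v} : ℝ) := by
        exact_mod_cast (card_le_card hsub).trans card_biUnion_le

lemma VertexExpander.mul_sum_le_sum_card_mul (hexp : VertexExpander N t γ μ)
    (hS : (#S : ℝ) ≤ γ * n) (hg : IsHeaviestNbrChoice N S a g) (ha : ∀ v ∈ S, 0 ≤ a v) :
    t * (1 - μ) * ∑ v ∈ S, a v ≤ ∑ v ∈ S, #{r ∈ N v | g r = v} * a v := by
  have := sum_mul_nonneg_of_sum_filter_lt_nonneg S a
    (fun v => #{r ∈ N v | g r = v} - t * (1 - μ)) ha fun τ => by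
      rw [sum_sub_distrib, sum_const, nsmul_eq_mul]
      linarith [hexp.mul_card_filter_lt_le_sum_card hS hg τ]
  simp only [sub_mul, sum_sub_distrib, ← mul_sum] at this
  linarith

lemma LeftRegular.sum_sum_ite_mul (hreg : LeftRegular N t) (S : Finset (Fin n)) (a : Fin n → ℝ)
    (g : Fin m → Fin n) (c d : ℝ) :
    ∑ r, ∑ v ∈ S with r ∈ N v, (if g r = v then c else d) * a v =
      ∑ v ∈ S, (c * #{r ∈ N v | g r = v} + d * (t - #{r ∈ N v | g r = v})) * a v := by
  rw [sum_comm' (t' := S) (s' := N) fun r v => by simp [and_comm]]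
  refine sum_congr rfl fun v _ => ?_
  have hcard := card_filter_add_card_filter_not (s := N v) (fun r => g r = v)
  rw [hreg v] at hcard
  rw [← sum_mul, sum_ite, sum_const, sum_const, nsmul_eq_mul, nsmul_eq_mul,
    show (t : ℝ) = #{r ∈ N v | g r = v} + #{r ∈ N v | ¬g r = v} by exact_mod_cast hcard.symm]
  ring

lemma VertexExpander.mul_sum_le_sum_sum_ite_mul (hexp : VertexExpander N t γ μ)
    (hreg : LeftRegular N t) (hS : (#S : ℝ) ≤ γ * n) (hg : IsHeaviestNbrChoice N S a g)
    (ha : ∀ v ∈ S, 0 ≤ a v) {c K : ℝ} (hc : 0 ≤ c) (hK : 0 ≤ K) :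
    (c * (t * (1 - μ)) - K * (μ * t)) * ∑ v ∈ S, a v ≤
      ∑ r, ∑ v ∈ S with r ∈ N v, (if g r = v then c else -K) * a v := by
  have hcharged := hexp.mul_sum_le_sum_card_mul hS hg ha
  rw [hreg.sum_sum_ite_mul]
  have hexpand : ∑ v ∈ S, (c * #{r ∈ N v | g r = v} + -K * (t - #{r ∈ N v | g r = v})) * a v =
      (c + K) * ∑ v ∈ S, #{r ∈ N v | g r = v} * a v - K * t * ∑ v ∈ S, a v := by
    simp only [mul_sum, ← sum_sub_distrib]
    exact sum_congr rfl fun v _ => by ring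
  rw [hexpand]
  nlinarith [mul_le_mul_of_nonneg_left hcharged (add_nonneg hc hK)]

end Graph

section Matrix

variable {m n : ℕ} (A : Matrix (Fin m) (Fin n) ℝ)

lemma mulVec_apply_eq_sum_filter_mem_matNbrs {x : Fin n → ℝ} {S : Finset (Fin n)}
    (hx : ∀ v ∉ S, x v = 0) (r : Fin m) :
    A.mulVec x r = ∑ v ∈ S with r ∈ matNbrs A v, A r v * x v := by
  change ∑ v, A r v * x v = _
  refine (sum_subset (subset_univ _) fun v _ hv => ?_).symm
  by_cases hvS : v ∈ S
  · simp_all [matNbrs]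
  · rw [hx v hvS, mul_zero]

lemma rpow_abs_mulVec_apply_ge (hsign : ∀ r u, A r u = 0 ∨ A r u = 1 ∨ A r u = -1)
    {smax : ℕ} (hdeg : ∀ r, rightDeg (matNbrs A) r ≤ smax) {p δ : ℝ} (hp : 1 ≤ p) (hδ : 0 < δ)
    {x : Fin n → ℝ} {S : Finset (Fin n)} (hx : ∀ v ∉ S, x v = 0) (r : Fin m) (u : Fin n)
    (hu : ∀ v ∈ S, r ∈ matNbrs A v → u ∈ S ∧ r ∈ matNbrs A u) :
    ∑ v ∈ S with r ∈ matNbrs A v,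
        (if u = v then 1 / (1 + δ) ^ (p - 1) else -(((smax : ℝ) - 1) ^ (p - 1) / δ ^ (p - 1))) *
          |x v| ^ p ≤
      |A.mulVec x r| ^ p := by
  set R := {v ∈ S | r ∈ matNbrs A v}
  rcases R.eq_empty_or_nonempty with hR | ⟨v₀, hv₀⟩
  · rw [hR, sum_empty]; positivity
  have huR : u ∈ R := by
    rw [mem_filter] at hv₀ ⊢
    exact hu v₀ hv₀.1 hv₀.2
  have habs : ∀ v ∈ R, |A r v| = 1 := fun v hv => by
    have hne : A r v ≠ 0 := by simpa [matNbrs] using (mem_filter.mp hv).2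
    rcases hsign r v with h | h | h <;> simp_all
  have hcard : (#(R.erase u) : ℝ) ≤ smax - 1 := by
    have hR : #R ≤ smax :=
      (card_le_card fun v hv => mem_filter.mpr ⟨mem_univ v, (mem_filter.mp hv).2⟩).trans (hdeg r)
    rw [card_erase_of_mem huR, Nat.cast_sub (card_pos.mpr ⟨u, huR⟩)]
    push_cast
    linarith [(Nat.cast_le (α := ℝ)).mpr hR]
  have hrow := le_rpow_abs_add_sum hp hδ (A r u * x u) (R.erase u) fun v => A r v * x v
  rw [abs_mul, habs u huR, one_mul,
    sum_congr rfl fun v hv => by rw [abs_mul, habs v (mem_of_mem_erase hv), one_mul]] at hrow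
  rw [mulVec_apply_eq_sum_filter_mem_matNbrs A hx, ← add_sum_erase _ _ huR,
    ← add_sum_erase _ _ huR, if_pos rfl,
    sum_congr rfl fun v hv => by rw [if_neg (ne_of_mem_erase hv).symm], ← mul_sum]
  have hpow : (#(R.erase u) : ℝ) ^ (p - 1) ≤ ((smax : ℝ) - 1) ^ (p - 1) :=
    Real.rpow_le_rpow (Nat.cast_nonneg _) hcard (by linarith)
  calc _ = |x u| ^ p / (1 + δ) ^ (p - 1) -
        ((smax : ℝ) - 1) ^ (p - 1) / δ ^ (p - 1) * ∑ v ∈ R.erase u, |x v| ^ p := by ring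
    _ ≤ _ := by gcongr
    _ ≤ _ := hrow

end Matrix

/-- **Lower bound in the ℓ_p-RIP lemma.** If `G_A` is `t`-left-regular and a
`(γ, μ)`-unique expander with maximum right degree `s_max`, then for any `p ≥ 1`,
`δ₁ > 0` and `γn`-sparse `x`,
`‖Ax‖_p^p ≥ (t(1-μ)/(1+δ₁)^(p-1) - (μt/δ₁^(p-1))(s_max-1)^(p-1)) ‖x‖_p^p`. -/
theorem rip_lower_bound {m n : ℕ} (t smax : ℕ) (γ μ : ℝ)
    (A : Matrix (Fin m) (Fin n) ℝ)
    (hsign : ∀ r u, A r u = 0 ∨ A r u = 1 ∨ A r u = -1)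
    (hreg : LeftRegular (matNbrs A) t)
    (hexp : UniqueExpander (matNbrs A) t γ μ)
    (hsmax : smax = Finset.univ.sup (fun r : Fin m => rightDeg (matNbrs A) r))
    (p δ₁ : ℝ) (hp : 1 ≤ p) (hδ : 0 < δ₁) :
    ∀ x : Fin n → ℝ, Sparse (γ * n) x →
      ((t : ℝ) * (1 - μ) / (1 + δ₁) ^ (p - 1) -
          μ * t / δ₁ ^ (p - 1) * ((smax : ℝ) - 1) ^ (p - 1)) * lpNorm p x ^ p ≤
        lpNorm p (A.mulVec x) ^ p := by
  classical
  intro x hx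
  have hp0 : 0 < p := by linarith
  set S := (Function.support x).toFinset
  have hxS : ∀ v ∉ S, x v = 0 := by simp [S]
  have hnorm : lpNorm p x ^ p = ∑ v ∈ S, |x v| ^ p := by
    rw [lpNorm_rpow_self hp0.ne', ← sum_subset (subset_univ S) fun v _ hv => by
      rw [hxS v hv, abs_zero, Real.zero_rpow hp0.ne']]
  have hAx : 0 ≤ lpNorm p (A.mulVec x) ^ p := by rw [lpNorm_rpow_self hp0.ne']; positivity
  rcases S.eq_empty_or_nonempty with hS | ⟨v₀, hv₀⟩
  · rwa [hnorm, hS, sum_empty, mul_zero]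
  rcases Nat.eq_zero_or_pos t with rfl | ht
  · simpa using hAx
  have hsmax1 : (1 : ℝ) ≤ smax := by exact_mod_cast hsmax ▸ hreg.one_le_sup_rightDeg ht v₀
  obtain ⟨g, hg⟩ := exists_isHeaviestNbrChoice (matNbrs A) ⟨v₀, hv₀⟩ fun v => |x v| ^ p
  have hScard : (#S : ℝ) ≤ γ * n := by rwa [Sparse, Set.ncard_eq_toFinset_card'] at hx
  have hdeg : ∀ r, rightDeg (matNbrs A) r ≤ smax := fun r => hsmax ▸ le_sup (mem_univ r)
  calc _ = (1 / (1 + δ₁) ^ (p - 1) * (t * (1 - μ)) -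
          ((smax : ℝ) - 1) ^ (p - 1) / δ₁ ^ (p - 1) * (μ * t)) * ∑ v ∈ S, |x v| ^ p := by
        rw [hnorm]; ring
    _ ≤ _ := hexp.vertexExpander.mul_sum_le_sum_sum_ite_mul hreg hScard hg
        (fun v _ => by positivity) (by positivity) 
        (div_nonneg (Real.rpow_nonneg (sub_nonneg.mpr hsmax1) _) (by positivity))
    _ ≤ ∑ r, |A.mulVec x r| ^ p := sum_le_sum fun r _ =>
        rpow_abs_mulVec_apply_ge A hsign hdeg hp hδ hxS r (g r) fun v hv hr =>
          (hg r v hv hr).imp_right And.left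
    _ = lpNorm p (A.mulVec x) ^ p := (lpNorm_rpow_self hp0.ne' _).symm
end
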